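/- arXiv:2501.00998 — 7 statements merged into one kernel-verified Lean document; each statement's English description precedes it below -/
import Mathlib

section
/- Every digraph D on n vertices with minimum semi-degree δ⁰(D) ≥ n/2 contains a directed Hamilton cycle. -/
/-- Out-degree of a vertex in a digraph given as a relation on `Fin n`. -/
noncomputable def outDeg {n : ℕ} (D : Fin n → Fin n → Prop) (v : Fin n) : ℕ :=
  Nat.card {w : Fin n // D v w}

/-- In-degree of a vertex in a digraph given as a relation on `Fin n`. -/
noncomputable def inDeg {n : ℕ} (D : Fin n → Fin n → Prop) (v : Fin n) : ℕ :=
  Nat.card {w : Fin n // D w v}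

/-!
Take a longest directed cycle `C`. The last vertex `v` of a longest path has all its
out-neighbours on the path; the first of them closes a cycle of length `> δ⁺ ≥ n/2`, so
`|C| > n/2`. If `C` misses a vertex, let `P = u ⋯ v` be a longest path in `D - C`; then all
in-neighbours of `u` and out-neighbours of `v` lie on `C ∪ P`, so `u` has a set `A` of at
least `n/2 - |P| + 1` in-neighbours on `C`, and `v` a set `B` of as many out-neighbours.
If the arc of `C` from some `b ∈ B` forward to some `a ∈ A` has at least `|C| - |P| + 1`
vertices, then `b → ⋯ → a → u → ⋯ → v → b` is a longer cycle. Otherwise every `a ∈ A` is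
followed by `|P|` vertices outside `B`, and counting on `ℤ/|C|` gives
`|A| + |B| + |P| - 1 ≤ |C|`, which contradicts the degree bounds since `|C| + |P| ≤ n`.
-/

open Finset

open Fin.NatCast in
theorem Fin.eq_univ_of_add_one_mem {l : ℕ} [NeZero l] {A : Finset (Fin l)} (hA : A.Nonempty)
    (h : ∀ a ∈ A, a + 1 ∈ A) : A = univ := by
  obtain ⟨a, ha⟩ := hA
  have hshift : ∀ j : ℕ, a + (j : Fin l) ∈ A := by
    intro j
    induction j with
    | zero => simpa using ha
    | succ j ih => simpa [← add_assoc] using h _ ih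
  exact eq_univ_of_forall fun x => by simpa using hshift (x - a).val

/-- `(a - b).val` is the distance from `b` forward to `a` in the cyclic order of `Fin l`. -/
theorem card_add_card_add_le_of_val_sub_lt {l : ℕ} [NeZero l] {A B : Finset (Fin l)}
    (hA : A.Nonempty) (hB : B.Nonempty) (m : ℕ)
    (h : ∀ a ∈ A, ∀ b ∈ B, (a - b).val + m + 1 < l) : #A + #B + m ≤ l := by
  obtain ⟨k, rfl⟩ := Nat.exists_eq_add_one_of_ne_zero (NeZero.ne l)
  have hsucc : ∀ {A : Finset (Fin (k + 1))} {m : ℕ},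
      (∀ a ∈ A, ∀ b ∈ B, (a - b).val + m + 1 < k + 1) → ∀ a ∈ A, a + 1 ∉ B :=
    fun h a ha hb => by simpa [sub_add_cancel_left, Fin.coe_neg_one] using h a ha _ hb
  induction m generalizing A with
  | zero =>
    have hdisj : Disjoint (A.image (· + 1)) B := by
      rw [disjoint_left]
      rintro _ hx
      obtain ⟨a, ha, rfl⟩ := mem_image.1 hx
      exact hsucc (m := 0) h a ha
    have := card_le_univ (A.image (· + 1) ∪ B)
    rwa [card_union_of_disjoint hdisj, card_image_of_injective _ (add_left_injective 1),
      Fintype.card_fin] at this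
  | succ m ih =>
    -- `A` is not closed under `+ 1`, so `A ∪ (A + 1)` is larger and satisfies the bound for `m`.
    obtain ⟨a₀, ha₀, ha₀'⟩ : ∃ a ∈ A, a + 1 ∉ A := by
      by_contra! hclosed
      obtain ⟨b, hb⟩ := hB
      exact hsucc h (b - 1) (Fin.eq_univ_of_add_one_mem hA hclosed ▸ mem_univ _) (by simpa)
    have hcard : #A + 1 ≤ #(A ∪ A.image (· + 1)) := by
      rw [← card_insert_of_notMem ha₀']
      exact card_le_card (insert_subset (mem_union_right _ (mem_image_of_mem _ ha₀))
        subset_union_left)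
    have := ih (A := A ∪ A.image (· + 1)) (hA.mono subset_union_left) ?_
    · omega
    intro a ha b hb
    rcases mem_union.1 ha with ha | ha
    · have := h a ha b hb
      omega
    · obtain ⟨a', ha', rfl⟩ := mem_image.1 ha
      have hle : (a' + 1 - b).val ≤ (a' - b).val + 1 := by
        rw [add_sub_right_comm, Fin.val_add_one]
        split_ifs <;> simp
      have := h a' ha' b hb
      omega

theorem List.exists_longest {α : Type*} [Finite α] {p : List α → Prop}
    (hp : ∀ l, p l → l.Nodup) (h : ∃ l, p l) : ∃ l, p l ∧ ∀ l', p l' → l'.length ≤ l.length := by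
  classical
  have := Fintype.ofFinite α
  have hfin : {l | p l}.Finite :=
    (Set.finite_range (Subtype.val : {l : List α // l.Nodup} → List α)).subset
      fun l hl => ⟨⟨l, hp l hl⟩, rfl⟩
  exact Set.exists_max_image _ List.length hfin h

section

variable {V : Type*}

def IsDipath (D : V → V → Prop) (P : List V) : Prop :=
  P.Nodup ∧ P.IsChain D

/-- A cycle is listed from any of its vertices; the closing edge runs from the last vertex
back to the first, so `[x]` is a cycle exactly when `D x x`. -/
def IsDicycle (D : V → V → Prop) (C : List V) : Prop :=
  IsDipath D C ∧ ∀ x ∈ C.getLast?, ∀ y ∈ C.head?, D x y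

variable {D : V → V → Prop} {P Q C : List V} {u v w : V}

theorem isDipath_singleton (x : V) : IsDipath D [x] :=
  ⟨List.nodup_singleton x, List.isChain_singleton x⟩

theorem IsDipath.cons (hP : IsDipath D P) (hw : w ∉ P) (h : ∀ x ∈ P.head?, D w x) :
    IsDipath D (w :: P) :=
  ⟨List.nodup_cons.2 ⟨hw, hP.1⟩, hP.2.cons h⟩

theorem IsDipath.concat (hP : IsDipath D P) (hw : w ∉ P) (h : ∀ x ∈ P.getLast?, D x w) :
    IsDipath D (P ++ [w]) :=
  ⟨hP.1.append (List.nodup_singleton w) (List.disjoint_singleton.2 hw),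
    hP.2.append (List.isChain_singleton w) (by simpa using h)⟩

theorem IsDipath.suffix (hP : IsDipath D P) (hQ : Q <:+ P) : IsDipath D Q :=
  ⟨hP.1.sublist hQ.sublist, hP.2.suffix hQ⟩

theorem exists_isDipath_maximal [Finite V] {S : Set V} (hS : S.Nonempty) :
    ∃ P u v, IsDipath D P ∧ P.head? = some u ∧ P.getLast? = some v ∧ (∀ x ∈ P, x ∈ S) ∧
      (∀ w ∈ S, D w u → w ∈ P) ∧ (∀ w ∈ S, D v w → w ∈ P) := by
  obtain ⟨x, hx⟩ := hS
  obtain ⟨P, ⟨hP, hPS⟩, hmax⟩ := List.exists_longest (p := fun P => IsDipath D P ∧ ∀ x ∈ P, x ∈ S)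
    (fun _ h => h.1.1) ⟨[x], isDipath_singleton x, by simpa⟩
  have hne : P ≠ [] := by
    rintro rfl
    simpa using hmax [x] ⟨isDipath_singleton x, by simpa⟩
  obtain ⟨u, hu⟩ := Option.ne_none_iff_exists'.1 (mt List.head?_eq_none_iff.1 hne)
  obtain ⟨v, hv⟩ := Option.ne_none_iff_exists'.1 (mt List.getLast?_eq_none_iff.1 hne)
  refine ⟨P, u, v, hP, hu, hv, hPS, fun w hw hwu => ?_, fun w hw hvw => ?_⟩
  · by_contra hwP
    have := hmax (w :: P) ⟨hP.cons hwP (by simpa [hu]), by simp_all⟩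
    simp at this
  · by_contra hwP
    have := hmax (P ++ [w])
      ⟨hP.concat hwP (by simpa [hv]), by simpa [or_imp, forall_and] using ⟨hPS, hw⟩⟩
    simp at this

theorem isDicycle_nil : IsDicycle D [] :=
  ⟨⟨List.nodup_nil, List.isChain_nil⟩, by simp⟩

theorem IsDicycle.rotate_one (hC : IsDicycle D C) : IsDicycle D (C.rotate 1) := by
  obtain ⟨⟨hnd, hch⟩, hclose⟩ := hC
  match C, hnd, hch, hclose with
  | [], _, _, _ => exact isDicycle_nil
  | [x], _, _, hclose => simpa [IsDicycle, IsDipath] using hclose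
  | x :: y :: t, hnd, hch, hclose =>
    refine ⟨⟨List.nodup_rotate.2 hnd, ?_⟩, ?_⟩
    · exact hch.tail.append (List.isChain_singleton x) (by simpa using hclose)
    · rw [List.rotate_cons_succ, List.rotate_zero, List.getLast?_concat]
      simpa using (List.isChain_cons_cons.1 hch).1

theorem IsDicycle.rotate (hC : IsDicycle D C) (k : ℕ) : IsDicycle D (C.rotate k) := by
  induction k with
  | zero => simpa using hC
  | succ k ih => simpa [List.rotate_rotate] using ih.rotate_one

theorem IsDicycle.take_append (hC : IsDicycle D C) (hP : IsDipath D P) (hdisj : ∀ x ∈ P, x ∉ C)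
    {r : ℕ} (hr : r < C.length) (hu : P.head? = some u) (hv : P.getLast? = some v)
    (hru : D C[r] u) (hvC : ∀ y ∈ C.head?, D v y) : IsDicycle D (C.take (r + 1) ++ P) := by
  have hP0 : P ≠ [] := by rintro rfl; simp at hu
  have hC0 : C ≠ [] := List.ne_nil_of_length_pos (by omega)
  refine ⟨⟨?_, hC.1.2.take _ |>.append hP.2 ?_⟩, ?_⟩
  · exact (hC.1.1.sublist (List.take_sublist _ _)).append hP.1
      fun x hx hxP => hdisj x hxP (List.mem_of_mem_take hx)
  · simpa [List.getLast?_take, hr, hu] using hru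
  · simpa [List.getLast?_append, hv, List.head?_append, List.head?_take, hC0] using hvC

theorem IsDicycle.exists_equiv_finRotate [Fintype V] (hC : IsDicycle D C) {n : ℕ}
    (hV : Fintype.card V = n) (h : C.length = n) :
    ∃ σ : Fin n ≃ V, ∀ k, D (σ k) (σ (finRotate n k)) := by
  have hinj : Function.Injective fun k : Fin n => C[k.val]'(by omega) :=
    fun i j hij => Fin.ext (hC.1.1.getElem_inj_iff.1 hij)
  refine ⟨Equiv.ofBijective _ ((Fintype.bijective_iff_injective_and_card _).2
    ⟨hinj, by simp [hV]⟩), fun k => ?_⟩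
  obtain ⟨m, rfl⟩ : ∃ m, n = m + 1 := ⟨n - 1, by have := k.pos; omega⟩
  simp only [Equiv.ofBijective_apply, coe_finRotate]
  split_ifs with hk
  · have := hC.2 C[m] (by simp [List.getLast?_eq_getElem?, h]) C[0]
      (by simp [List.head?_eq_getElem?])
    simpa [hk] using this
  · exact List.isChain_iff_getElem.1 hC.1.2 k (by have := Fin.val_lt_last hk; omega)

theorem card_filter_le_card_filter_getElem_add [Fintype V] [DecidableEq V]
    {R : V → V → Prop} [DecidableRel R] (hP : P.Nodup) (hv : v ∈ P) (hvv : ¬ R v v)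
    (h : ∀ w, R v w → w ∈ C ∨ w ∈ P) :
    #{w | R v w} ≤ #{i : Fin C.length | R v C[i]} + (P.length - 1) := by
  set A : Finset (Fin C.length) := {i | R v C[i]}
  calc #{w | R v w}
      ≤ #(A.image (fun i => C[i]) ∪ P.toFinset.erase v) := by
        refine card_le_card fun w hw => ?_
        rw [mem_filter] at hw
        rcases h w hw.2 with hwC | hwP
        · obtain ⟨i, hi, rfl⟩ := List.mem_iff_getElem.1 hwC
          exact mem_union_left _ (mem_image.2 ⟨⟨i, hi⟩, by simpa [A] using hw.2, rfl⟩)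
        · refine mem_union_right _ (mem_erase.2 ⟨?_, List.mem_toFinset.2 hwP⟩)
          rintro rfl
          exact hvv hw.2
    _ ≤ #A + #(P.toFinset.erase v) :=
        (card_union_le _ _).trans (Nat.add_le_add_right card_image_le _)
    _ = #A + (P.length - 1) := by
        rw [card_erase_of_mem (List.mem_toFinset.2 hv), List.toFinset_card_of_nodup hP]

theorem exists_isDicycle_lt_length [Fintype V] [DecidableEq V] [DecidableRel D] [Nonempty V]
    (hloop : ∀ v, ¬ D v v) {δ : ℕ} (hδ : 0 < δ) (hout : ∀ v, δ ≤ #{w | D v w}) :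
    ∃ C, IsDicycle D C ∧ δ < C.length := by
  obtain ⟨P, -, v, hP, -, hv, -, -, hvP⟩ := exists_isDipath_maximal (D := D) Set.univ_nonempty
  -- `C` is the segment of `P` from the first out-neighbour of `v` to `v`.
  set C := P.dropWhile (fun w => ¬ D v w)
  have hCP : C <:+ P := List.dropWhile_suffix _
  have hmem : ∀ w, D v w → w ∈ C := by
    intro w hw
    have := hvP w trivial hw
    rw [← List.takeWhile_append_dropWhile (p := fun w => ¬ D v w) (l := P)] at this
    rcases List.mem_append.1 this with h | h
    · simpa [hw] using List.mem_takeWhile_imp h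
    · exact h
  obtain ⟨w, hw⟩ : ∃ w, D v w := by
    simpa [Finset.Nonempty] using card_pos.1 (hδ.trans_le (hout v))
  have hC0 : C ≠ [] := List.ne_nil_of_mem (hmem w hw)
  have hCv : C.getLast? = some v := by
    rw [List.getLast?_eq_some_getLast hC0, hCP.getLast hC0, ← List.getLast?_eq_some_getLast]
    exact hv
  have hvC : D v (C.head hC0) := by
    simpa [C] using List.head_dropWhile_not (fun w => ¬ D v w) hC0
  refine ⟨C, ⟨hP.suffix hCP, by simpa [hCv, List.head?_eq_some_head hC0] using hvC⟩, ?_⟩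
  have hcount := card_filter_le_card_filter_getElem_add (C := []) (R := D) (hP.suffix hCP).1
    (List.mem_of_getLast? hCv) (hloop v) fun w hw => Or.inr (hmem w hw)
  simp only [List.length_nil, univ_eq_empty, filter_empty, card_empty, zero_add] at hcount
  have := hout v
  omega

theorem IsDicycle.exists_longer [Fintype V] [DecidableEq V] [DecidableRel D]
    (hloop : ∀ v, ¬ D v v)
    (hdeg : ∀ v, Fintype.card V ≤ 2 * #{w | D v w} ∧ Fintype.card V ≤ 2 * #{w | D w v})
    (hC : IsDicycle D C) (hlong : Fintype.card V + 2 ≤ 2 * C.length)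
    (hshort : C.length < Fintype.card V) : ∃ C', IsDicycle D C' ∧ C.length < C'.length := by
  have : NeZero C.length := ⟨by omega⟩
  obtain ⟨x, hx⟩ : ∃ x, x ∉ C := by
    by_contra! h
    have := (card_le_card (s := univ) fun x _ => List.mem_toFinset.2 (h x)).trans
      (List.toFinset_card_le C)
    rw [card_univ] at this
    omega
  obtain ⟨P, u, v, hP, hu, hv, hPC, huP, hvP⟩ :=
    exists_isDipath_maximal (D := D) (S := {x | x ∉ C}) ⟨x, hx⟩
  have hlen : P.length + C.length ≤ Fintype.card V := by
    simpa using (hP.1.append hC.1.1 fun x hxP hxC => hPC x hxP hxC).length_le_card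
  set A : Finset (Fin C.length) := {i | D C[i] u}
  set B : Finset (Fin C.length) := {i | D v C[i]}
  have hA : Fintype.card V ≤ 2 * (#A + (P.length - 1)) :=
    (hdeg u).2.trans <| Nat.mul_le_mul_left 2 <|
      card_filter_le_card_filter_getElem_add (R := fun x y => D y x) hP.1
        (List.mem_of_mem_head? hu) (hloop u) fun w hw => (em (w ∈ C)).imp_right (huP w · hw)
  have hB : Fintype.card V ≤ 2 * (#B + (P.length - 1)) :=
    (hdeg v).1.trans <| Nat.mul_le_mul_left 2 <|
      card_filter_le_card_filter_getElem_add (R := D) hP.1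
        (List.mem_of_getLast? hv) (hloop v) fun w hw => (em (w ∈ C)).imp_right (hvP w · hw)
  have hP0 : 0 < P.length := List.length_pos_of_mem (List.mem_of_mem_head? hu)
  obtain ⟨a, ha, b, hb, hab⟩ : ∃ a ∈ A, ∃ b ∈ B, C.length ≤ (a - b).val + P.length := by
    by_contra! h
    have := card_add_card_add_le_of_val_sub_lt (card_pos.1 (by omega : 0 < #A))
      (card_pos.1 (by omega : 0 < #B)) (P.length - 1)
      fun a ha b hb => by have := h a ha b hb; omega
    omega
  have hrot : (C.rotate b)[(a - b).val]'(by simp) = C[a] := by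
    simp only [List.getElem_rotate]
    congr 1
    rw [← Fin.val_add, sub_add_cancel]
  refine ⟨(C.rotate b).take ((a - b).val + 1) ++ P, (hC.rotate b).take_append hP
    (fun x hxP => by simpa using hPC x hxP) (by simp) hu hv ?_ ?_, by simp; omega⟩
  · rw [hrot]
    exact (mem_filter.1 ha).2
  · simpa [List.head?_rotate b.isLt] using (mem_filter.1 hb).2

end

theorem outDeg_eq_card_filter {n : ℕ} (D : Fin n → Fin n → Prop) [DecidableRel D] (v : Fin n) :
    outDeg D v = #{w | D v w} := by
  rw [outDeg, Nat.card_eq_fintype_card, Fintype.card_subtype]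

theorem inDeg_eq_card_filter {n : ℕ} (D : Fin n → Fin n → Prop) [DecidableRel D] (v : Fin n) :
    inDeg D v = #{w | D w v} := by
  rw [inDeg, Nat.card_eq_fintype_card, Fintype.card_subtype]

/-- **Ghouila-Houri's theorem.** Every loopless digraph on `n` vertices with minimum
out-degree and minimum in-degree at least `n/2` contains a directed Hamilton cycle,
i.e. a cyclic ordering `σ` of the vertices such that each vertex sends an edge to the
next one. -/
theorem ghouila_houri (n : ℕ) (D : Fin n → Fin n → Prop)
    (hloop : ∀ v, ¬ D v v)
    (hdeg : ∀ v, (n : ℝ) / 2 ≤ outDeg D v ∧ (n : ℝ) / 2 ≤ inDeg D v) :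
    ∃ σ : Fin n ≃ Fin n, ∀ k : Fin n, D (σ k) (σ (finRotate n k)) := by
  classical
  have hdeg' : ∀ v, n ≤ 2 * #{w | D v w} ∧ n ≤ 2 * #{w | D w v} := fun v => by
    have h := hdeg v
    rw [outDeg_eq_card_filter, inDeg_eq_card_filter] at h
    constructor
    · exact_mod_cast (by linarith : (n : ℝ) ≤ 2 * #{w | D v w})
    · exact_mod_cast (by linarith : (n : ℝ) ≤ 2 * #{w | D w v})
  obtain ⟨C, hC, hmax⟩ := List.exists_longest (fun _ h => h.1.1) ⟨[], isDicycle_nil (D := D)⟩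
  have hlen : C.length = n := by
    refine (hC.1.1.length_le_card.trans_eq (Fintype.card_fin n)).eq_of_not_lt fun hlt => ?_
    have : Nonempty (Fin n) := ⟨⟨0, by omega⟩⟩
    obtain ⟨C₀, hC₀, hδ⟩ := exists_isDicycle_lt_length hloop (δ := (n + 1) / 2) (by omega)
      fun v => by have := (hdeg' v).1; omega
    obtain ⟨C', hC', hlt'⟩ := hC.exists_longer hloop (by simpa using hdeg')
      (by have := hmax C₀ hC₀; simp; omega) (by simpa using hlt)
    have := hmax C' hC'
    omega
  exact hC.exists_equiv_finRotate (Fintype.card_fin n) hlen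
end

section
/- Let 𝒢 = {G_1, …, G_n} be a collection of bipartite graphs on a common vertex bipartition V_1 ∪ V_2 with |V_1| = |V_2| = n. If for each i ∈ [n] we have d_{G_i}(v) > n/2 for every v ∈ V_1 and d_{G_i}(v) ≥ n/2 for every v ∈ V_2, then 𝒢 contains a transversal perfect matching: a perfect matching M of the complete bipartite graph on V_1 ∪ V_2 together with a bijection φ : M → [n] such that e ∈ E(G_{φ(e)}) for every e ∈ M. -/
/-!
Grow a partial transversal matching one colour at a time, recorded by bijections `g : ι ≃ V`,
`f : ι ≃ W` and the set `s` of colours whose edge `g i f i` is genuine: the colours outside `s`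
carry the free vertices. A colour `x` may take over the `W`-vertex of a matched colour `y` when
`G x` joins `g x` to `f y`. A new colour `c` can be added along such a shift path from `c` to a
free vertex of `W`, or, after swapping `g c` and `g j` for a colour `j` with `g j ∈ N_c(f c)`,
along a shift cycle through `j` that starts with an edge of `N_j(g c)`.

If neither exists, take a terminal strongly connected class `Z` of the colours reachable from
`c`. All neighbourhoods `N_i(g i)`, `i ∈ Z`, lie in `f(Z)`, so `|Z| > n/2`; as
`|N_c(f c)| ≥ n/2`, some `j ∈ Z` has `g j ∈ N_c(f c)`; then `N_j(g c)` avoids `f(Z)`,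
contradicting `|N_j(g c)| > n/2`.
-/

open Finset Relation Equiv

theorem Relation.ReflTransGen.exists_avoid_of_ne {α : Type*} {r : α → α → Prop} {a b : α}
    (h : ReflTransGen r a b) (hab : a ≠ b) :
    ∃ p ≠ b, ReflTransGen (fun x y => r x y ∧ x ≠ b ∧ y ≠ b) a p ∧ r p b := by
  induction h using ReflTransGen.head_induction_on with
  | refl => exact absurd rfl hab
  | @head a c hac _ ih =>
    by_cases hcb : c = b
    · subst hcb
      exact ⟨a, hab, .refl, hac⟩
    · obtain ⟨p, hpb, hp, hpr⟩ := ih hcb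
      exact ⟨p, hpb, .head ⟨hac, hab, hcb⟩ hp, hpr⟩

theorem Finset.exists_subset_closed_reflTransGen {α : Type*} {r : α → α → Prop} {R : Finset α}
    (hR : R.Nonempty) (hclosed : ∀ x ∈ R, ∀ y, r x y → y ∈ R) :
    ∃ Z ⊆ R, Z.Nonempty ∧ (∀ x ∈ Z, ∀ y, r x y → y ∈ Z) ∧
      ∀ x ∈ Z, ∀ y ∈ Z, ReflTransGen r x y := by
  classical
  obtain ⟨Z, hZR, hZmin⟩ := exists_minimal_le_of_wellFoundedLT
    (fun Z : Finset α => Z.Nonempty ∧ ∀ x ∈ Z, ∀ y, r x y → y ∈ Z) R ⟨hR, hclosed⟩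
  refine ⟨Z, hZR, hZmin.prop.1, hZmin.prop.2, fun x hx y hy => ?_⟩
  by_contra hxy
  set Z' := Z.filter (¬ReflTransGen r · y)
  have hZ' : Z'.Nonempty ∧ ∀ z ∈ Z', ∀ w, r z w → w ∈ Z' := by
    refine ⟨⟨x, mem_filter.2 ⟨hx, hxy⟩⟩, fun z hz w hzw => ?_⟩
    obtain ⟨hzZ, hzy⟩ := mem_filter.1 hz
    exact mem_filter.2 ⟨hZmin.prop.2 z hzZ w hzw, fun hwy => hzy (hwy.head hzw)⟩
  exact (mem_filter.1 (hZmin.le_of_le hZ' (filter_subset _ Z) hy)).2 .refl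

theorem Equiv.natCard_subtype_le_card_of_mem {ι W : Type*} (e : ι ≃ W) {P : W → Prop}
    {Z : Finset ι} (h : ∀ l, P (e l) → l ∈ Z) : Nat.card {w // P w} ≤ #Z :=
  calc Nat.card {w // P w} = Nat.card {l // P (e l)} :=
        Nat.card_congr (e.subtypeEquiv fun _ => Iff.rfl).symm
    _ ≤ Nat.card Z :=
        Nat.card_le_card_of_injective (fun l => ⟨l.1, h l.1 l.2⟩)
          fun _ _ hl => Subtype.ext (congrArg Subtype.val hl :)
    _ = #Z := Nat.card_eq_finsetCard Z

section TransversalMatching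

variable {ι V W : Type*} {G : ι → V → W → Prop}

variable (G) in
def IsTransversalOn (s : Finset ι) (g : ι ≃ V) (f : ι ≃ W) : Prop :=
  ∀ i ∈ s, G i (g i) (f i)

variable (G) in
/-- Colour `x` can take over the `W`-vertex of the matched colour `y`. -/
def ShiftRel (s : Finset ι) (g : ι ≃ V) (f : ι ≃ W) (x y : ι) : Prop :=
  y ∈ s ∧ G x (g x) (f y)

variable {s : Finset ι} {g : ι ≃ V} {f : ι ≃ W} {a b c i j i₀ : ι}

theorem exists_shiftRel_path_or_cycle [Fintype ι]
    (h1 : ∀ i v, Fintype.card ι < 2 * Nat.card {w // G i v w})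
    (h2 : ∀ i w, Fintype.card ι ≤ 2 * Nat.card {v // G i v w}) :
    (∃ i, ∃ b ∉ s, ReflTransGen (ShiftRel G s g f) c i ∧ G i (g i) (f b)) ∨
      ∃ j ∈ s, G c (g j) (f c) ∧ ∃ i₀ ∈ s,
        ReflTransGen (fun x y => x ∈ s ∧ ShiftRel G s g f x y) i₀ j ∧ G j (g c) (f i₀) := by
  classical
  by_contra! ⟨hpath, hcycle⟩
  have hmatched : ∀ i, ReflTransGen (ShiftRel G s g f) c i → ∀ l, G i (g i) (f l) → l ∈ s :=
    fun i hi l hl => by_contra fun hls => hpath i l hls hi hl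
  set R := s.filter (ReflTransGen (ShiftRel G s g f) c)
  have hR : R.Nonempty := by
    have hle := f.natCard_subtype_le_card_of_mem (Z := R) fun l hl =>
      mem_filter.2 ⟨hmatched c .refl l hl, .single ⟨hmatched c .refl l hl, hl⟩⟩
    have := h1 c (g c)
    rw [← card_pos]
    omega
  have hRclosed : ∀ x ∈ R, ∀ y, (x ∈ s ∧ ShiftRel G s g f x y) → y ∈ R :=
    fun x hx y hxy => mem_filter.2 ⟨hxy.2.1, (mem_filter.1 hx).2.tail hxy.2⟩
  obtain ⟨Z, hZR, ⟨i, hi⟩, hZclosed, hZconn⟩ := exists_subset_closed_reflTransGen hR hRclosed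
  have hZs : Z ⊆ s := hZR.trans (filter_subset _ _)
  have hZ : Fintype.card ι < 2 * #Z := by
    have hle := f.natCard_subtype_le_card_of_mem fun l hl =>
      hZclosed i hi l ⟨hZs hi, hmatched i (mem_filter.1 (hZR hi)).2 l hl, hl⟩
    have := h1 i (g i)
    omega
  obtain ⟨j, hjZ, hjc⟩ : ∃ j ∈ Z, G c (g j) (f c) := by
    set T := univ.filter fun l => G c (g l) (f c)
    have hle := g.natCard_subtype_le_card_of_mem (P := (G c · (f c))) (Z := T) (by simp [T])
    have := h2 c (f c)
    obtain ⟨j, hj⟩ := inter_nonempty_of_card_lt_card_add_card (subset_univ Z)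
      (subset_univ T) (by rw [card_univ]; omega)
    exact ⟨j, (mem_inter.1 hj).1, (mem_filter.1 (mem_inter.1 hj).2).2⟩
  have hle := f.natCard_subtype_le_card_of_mem (Z := Zᶜ) fun l hl => mem_compl.2 fun hlZ =>
    hcycle j (hZs hjZ) hjc l (hZs hlZ) (hZconn l hlZ j hjZ) hl
  have := h1 j (g c)
  rw [card_compl] at hle
  omega

variable [DecidableEq ι]

theorem IsTransversalOn.insert_swap_right (h : IsTransversalOn G s g f) (ha : a ∉ s)
    (hb : b ∉ s) (hab : G a (g a) (f b)) :
    IsTransversalOn G (insert a s) g ((swap a b).trans f) := by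
  intro x hx
  rcases mem_insert.1 hx with rfl | hx
  · simpa using hab
  · rw [trans_apply, swap_apply_of_ne_of_ne (ne_of_mem_of_not_mem hx ha)
      (ne_of_mem_of_not_mem hx hb)]
    exact h x hx

theorem IsTransversalOn.insert_erase_swap_left (h : IsTransversalOn G s g f) (hc : c ∉ s)
    (hcj : G c (g j) (f c)) :
    IsTransversalOn G (insert c (s.erase j)) ((swap c j).trans g) f := by
  intro x hx
  rcases mem_insert.1 hx with rfl | hx
  · simpa using hcj
  · obtain ⟨hxj, hxs⟩ := mem_erase.1 hx
    rw [trans_apply, swap_apply_of_ne_of_ne (ne_of_mem_of_not_mem hxs hc) hxj]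
    exact h x hxs

/-- `a = b` is allowed: the shift path is then a cycle. -/
theorem IsTransversalOn.exists_insert_of_reflTransGen (h : IsTransversalOn G s g f)
    (ha : a ∉ s) (hb : b ∉ s) (hpath : ReflTransGen (ShiftRel G s g f) a i)
    (hend : G i (g i) (f b)) :
    ∃ f' : ι ≃ W, IsTransversalOn G (insert a s) g f' ∧
      ∀ x ∉ insert a s, f' x = f (swap a b x) := by
  induction s using Finset.strongInduction generalizing f i with
  | H s ih =>
  by_cases hai : a = i
  · subst hai
    exact ⟨_, h.insert_swap_right ha hb hend, fun _ _ => rfl⟩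
  obtain ⟨p, -, hp, his, hpi⟩ := hpath.exists_avoid_of_ne hai
  have hib : i ≠ b := ne_of_mem_of_not_mem his hb
  -- move colour `i` to `f b`; this frees `f i` for the shorter path ending at `p`
  set f₁ := (swap i b).trans f
  have hf₁ : ∀ y ∈ s, y ≠ i → f₁ y = f y := fun y hy hyi => by
    simp [f₁, swap_apply_of_ne_of_ne hyi (ne_of_mem_of_not_mem hy hb)]
  have h₁ : IsTransversalOn G (s.erase i) g f₁ := fun x hx => by
    obtain ⟨hxi, hxs⟩ := mem_erase.1 hx
    rw [hf₁ x hxs hxi]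
    exact h x hxs
  have hp₁ : ReflTransGen (ShiftRel G (s.erase i) g f₁) a p := by
    refine ReflTransGen.mono (fun x y ⟨⟨hy, hxy⟩, _, hyi⟩ => ?_) _ _ hp
    exact ⟨mem_erase.2 ⟨hyi, hy⟩, by rwa [hf₁ y hy hyi]⟩
  obtain ⟨f', hf', hframe⟩ := ih _ (erase_ssubset his) h₁ (fun h => ha (mem_of_mem_erase h))
    (fun h => hb (mem_of_mem_erase h)) hp₁ (by simpa [f₁] using hpi)
  have hia : i ≠ a := ne_of_mem_of_not_mem his ha
  refine ⟨f', fun x hx => ?_, fun x hx => ?_⟩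
  · by_cases hxi : x = i
    · subst hxi
      rw [hframe x (by simp [hia])]
      simpa [f₁, swap_apply_of_ne_of_ne hia hib] using hend
    · exact hf' x (by grind)
  · have hxa : x ≠ a := by grind
    have hxs : x ∉ s := by grind
    rw [hframe x (by grind)]
    by_cases hxb : x = b
    · subst hxb
      simp [f₁, swap_apply_of_ne_of_ne (ne_of_mem_of_not_mem his ha).symm hxa.symm]
    · simp [f₁, swap_apply_of_ne_of_ne hxa hxb, swap_apply_of_ne_of_ne (by grind : x ≠ i) hxb]

theorem IsTransversalOn.exists_insert_of_reflTransGen_swap (h : IsTransversalOn G s g f)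
    (hc : c ∉ s) (hj : j ∈ s) (hcj : G c (g j) (f c)) (hi₀ : i₀ ∈ s)
    (hpath : ReflTransGen (fun x y => x ∈ s ∧ ShiftRel G s g f x y) i₀ j)
    (hji₀ : G j (g c) (f i₀)) :
    ∃ (g' : ι ≃ V) (f' : ι ≃ W), IsTransversalOn G (insert c s) g' f' := by
  set g' := (swap c j).trans g
  have hjc : j ≠ c := ne_of_mem_of_not_mem hj hc
  have hg'j : g' j = g c := by simp [g']
  have hg' : ∀ x ∈ s, x ≠ j → g' x = g x := fun x hx hxj => by
    simp [g', swap_apply_of_ne_of_ne (ne_of_mem_of_not_mem hx hc) hxj]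
  -- after the swap, colour `j` is unmatched and closes a cycle through `i₀`
  obtain ⟨p, hp, hpj⟩ : ∃ p, ReflTransGen (ShiftRel G (insert c (s.erase j)) g' f) j p ∧
      G p (g' p) (f j) := by
    by_cases hi₀j : i₀ = j
    · subst hi₀j
      exact ⟨i₀, .refl, by rwa [hg'j]⟩
    obtain ⟨p, hpj, hp, ⟨hps, -, hpj'⟩⟩ := hpath.exists_avoid_of_ne hi₀j
    refine ⟨p, .head ⟨by simp [hi₀j, hi₀], by rwa [hg'j]⟩ (ReflTransGen.mono ?_ _ _ hp),
      by rwa [hg' p hps hpj]⟩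
    rintro x y ⟨⟨hx, hy, hxy⟩, hxj, hyj⟩
    exact ⟨by simp [hy, hyj], by rwa [hg' x hx hxj]⟩
  obtain ⟨f', hf', -⟩ := (h.insert_erase_swap_left hc hcj).exists_insert_of_reflTransGen
    (by simp [hjc]) (by simp [hjc]) hp hpj
  refine ⟨g', f', ?_⟩
  rwa [insert_comm, insert_erase hj] at hf'

theorem IsTransversalOn.exists_insert [Fintype ι]
    (h1 : ∀ i v, Fintype.card ι < 2 * Nat.card {w // G i v w})
    (h2 : ∀ i w, Fintype.card ι ≤ 2 * Nat.card {v // G i v w})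
    (h : IsTransversalOn G s g f) (hc : c ∉ s) :
    ∃ (g' : ι ≃ V) (f' : ι ≃ W), IsTransversalOn G (insert c s) g' f' := by
  rcases exists_shiftRel_path_or_cycle (s := s) (g := g) (f := f) (c := c) h1 h2 with
    ⟨i, b, hb, hpath, hend⟩ | ⟨j, hj, hcj, i₀, hi₀, hpath, hji₀⟩
  · obtain ⟨f', hf', -⟩ := h.exists_insert_of_reflTransGen hc hb hpath hend
    exact ⟨g, f', hf'⟩
  · exact h.exists_insert_of_reflTransGen_swap hc hj hcj hi₀ hpath hji₀

theorem exists_transversal_perfect_matching [Fintype ι]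
    (h1 : ∀ i v, Fintype.card ι < 2 * Nat.card {w // G i v w})
    (h2 : ∀ i w, Fintype.card ι ≤ 2 * Nat.card {v // G i v w}) (g₀ : ι ≃ V) (f₀ : ι ≃ W) :
    ∃ (g : ι ≃ V) (f : ι ≃ W), ∀ i, G i (g i) (f i) := by
  have key : ∀ s : Finset ι, ∃ (g : ι ≃ V) (f : ι ≃ W), IsTransversalOn G s g f := by
    intro s
    induction s using Finset.induction_on with
    | empty => exact ⟨g₀, f₀, by simp [IsTransversalOn]⟩
    | insert c s hc ih =>
      obtain ⟨g, f, h⟩ := ih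
      exact h.exists_insert h1 h2 hc
  obtain ⟨g, f, h⟩ := key univ
  exact ⟨g, f, fun i => h i (mem_univ i)⟩

end TransversalMatching

/-- **Bradshaw's theorem: transversal perfect matchings in bipartite graph collections.**
`G i v w` means that in the `i`-th bipartite graph the vertex `v ∈ V₁` is joined to
`w ∈ V₂` (both sides are copies of `Fin n`).  If in every graph every vertex of `V₁` has
degree greater than `n/2` and every vertex of `V₂` has degree at least `n/2`, then the
collection contains a transversal perfect matching: a perfect matching `f : V₁ ≃ V₂`
of the complete bipartite graph together with a bijection `φ` from the matching edges
(indexed by their endpoint in `V₁`) to the colours with `v (f v) ∈ G (φ v)`. -/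
theorem transversal_bipartite_perfect_matching (n : ℕ)
    (G : Fin n → Fin n → Fin n → Prop)
    (h1 : ∀ i v, (n : ℝ) / 2 < Nat.card {w : Fin n // G i v w})
    (h2 : ∀ i w, (n : ℝ) / 2 ≤ Nat.card {v : Fin n // G i v w}) :
    ∃ f φ : Fin n ≃ Fin n, ∀ v : Fin n, G (φ v) v (f v) := by
  have h1' : ∀ i v, Fintype.card (Fin n) < 2 * Nat.card {w // G i v w} := fun i v => by
    have := h1 i v
    rw [Fintype.card_fin]
    exact_mod_cast (by linarith : (n : ℝ) < 2 * Nat.card {w // G i v w})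
  have h2' : ∀ i w, Fintype.card (Fin n) ≤ 2 * Nat.card {v // G i v w} := fun i w => by
    have := h2 i w
    rw [Fintype.card_fin]
    exact_mod_cast (by linarith : (n : ℝ) ≤ 2 * Nat.card {v // G i v w})
  obtain ⟨g, f, hgf⟩ := exists_transversal_perfect_matching h1' h2' (.refl _) (.refl _)
  exact ⟨g.symm.trans f, g.symm, fun v => by simpa using hgf (g.symm v)⟩
end

section
/- Let n be a positive integer, let V be a set of n vertices, and let 0 < ε ≤ δ/8. Suppose A_i, B_i, A_j, B_j ⊆ V satisfy A_i ∩ B_i = ∅, A_j ∩ B_j = ∅, |A_i| = |B_i| = |A_j| = |B_j| = (1/2 − ε)n, and |A_i Δ A_j| ≥ δn and |A_i Δ B_j| ≥ δn. Then |X ∩ Y| ≥ δn/4 for all choices X ∈ {A_i, B_i} and Y ∈ {A_j, B_j}. -/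
open scoped symmDiff

lemma symm_card_aux {V : Type*} [DecidableEq V] (s t : Finset V) :
    ((s ∆ t).card : ℕ) + ((s ∩ t).card + (s ∩ t).card) = s.card + t.card := by
  rw [symmDiff_def, Finset.sup_eq_union, Finset.card_union_of_disjoint
    (disjoint_sdiff_sdiff)]
  have h1 := Finset.card_sdiff_add_card_inter s t
  have h2 := Finset.card_sdiff_add_card_inter t s
  rw [Finset.inter_comm t s] at h2
  omega

lemma inter_lb {V : Type*} [Fintype V] [DecidableEq V] (s t : Finset V) :
    (s.card : ℝ) + t.card - Fintype.card V ≤ ((s ∩ t).card : ℝ) := by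
  have h := Finset.card_union_add_card_inter s t
  have h2 : (s ∪ t).card ≤ Fintype.card V := Finset.card_le_univ _
  have h2' : ((s ∪ t).card : ℝ) ≤ (Fintype.card V : ℝ) := by exact_mod_cast h2
  have h' : ((s ∪ t).card : ℝ) + (s ∩ t).card = s.card + t.card := by exact_mod_cast h
  linarith

/-- If `(Aᵢ, Bᵢ)` and `(Aⱼ, Bⱼ)` are disjoint pairs of sets of size `(1/2 − ε)n` in an
`n`-element vertex set with `0 < ε ≤ δ/8`, and `|Aᵢ Δ Aⱼ| ≥ δn` and `|Aᵢ Δ Bⱼ| ≥ δn`,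
then all four intersections `X ∩ Y` with `X ∈ {Aᵢ, Bᵢ}` and `Y ∈ {Aⱼ, Bⱼ}` have size at
least `δn/4`. -/
theorem crossing_intersections {V : Type*} [Fintype V] [DecidableEq V]
    (n : ℕ) (hV : Fintype.card V = n) (hn : 0 < n)
    (ε δ : ℝ) (hε : 0 < ε) (hεδ : ε ≤ δ / 8)
    (Ai Bi Aj Bj : Finset V)
    (hd1 : Disjoint Ai Bi) (hd2 : Disjoint Aj Bj)
    (hAi : (Ai.card : ℝ) = (1/2 - ε) * n) (hBi : (Bi.card : ℝ) = (1/2 - ε) * n)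
    (hAj : (Aj.card : ℝ) = (1/2 - ε) * n) (hBj : (Bj.card : ℝ) = (1/2 - ε) * n)
    (hc1 : δ * n ≤ ((Ai ∆ Aj).card : ℝ)) (hc2 : δ * n ≤ ((Ai ∆ Bj).card : ℝ)) :
    δ * n / 4 ≤ ((Ai ∩ Aj).card : ℝ) ∧ δ * n / 4 ≤ ((Ai ∩ Bj).card : ℝ) ∧
    δ * n / 4 ≤ ((Bi ∩ Aj).card : ℝ) ∧ δ * n / 4 ≤ ((Bi ∩ Bj).card : ℝ) := by
  have hn' : (0 : ℝ) < n := by exact_mod_cast hn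
  -- symmDiff card identities
  have hs1 : ((Ai ∆ Aj).card : ℝ) + ((Ai ∩ Aj).card + (Ai ∩ Aj).card)
      = Ai.card + Aj.card := by exact_mod_cast congrArg (Nat.cast (R := ℝ)) (symm_card_aux Ai Aj)
  have hs2 : ((Ai ∆ Bj).card : ℝ) + ((Ai ∩ Bj).card + (Ai ∩ Bj).card)
      = Ai.card + Bj.card := by exact_mod_cast congrArg (Nat.cast (R := ℝ)) (symm_card_aux Ai Bj)
  -- upper bounds on Ai∩Aj and Ai∩Bj
  have h1 : ((Ai ∩ Aj).card : ℝ) ≤ (1/2 - ε) * n - δ * n / 2 := by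
    rw [hAi, hAj] at hs1; linarith
  have h2 : ((Ai ∩ Bj).card : ℝ) ≤ (1/2 - ε) * n - δ * n / 2 := by
    rw [hAi, hBj] at hs2; linarith
  -- unions
  have huj : ((Aj ∪ Bj).card : ℝ) = (1 - 2*ε) * n := by
    rw [Finset.card_union_of_disjoint hd2]; push_cast; rw [hAj, hBj]; ring
  have hui : ((Ai ∪ Bi).card : ℝ) = (1 - 2*ε) * n := by
    rw [Finset.card_union_of_disjoint hd1]; push_cast; rw [hAi, hBi]; ring
  -- splitting intersections with unions
  have hsplit1 : ((Ai ∩ (Aj ∪ Bj)).card : ℝ) = (Ai ∩ Aj).card + (Ai ∩ Bj).card := by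
    rw [Finset.inter_union_distrib_left, Finset.card_union_of_disjoint
      (Finset.disjoint_of_subset_left Finset.inter_subset_right
        (Finset.disjoint_of_subset_right Finset.inter_subset_right hd2))]
    push_cast; ring
  have hsplit2 : (((Aj ∪ Bj) ∩ Bi).card : ℝ) = (Bi ∩ Aj).card + (Bi ∩ Bj).card := by
    rw [Finset.inter_comm, Finset.inter_union_distrib_left, Finset.card_union_of_disjoint
      (Finset.disjoint_of_subset_left Finset.inter_subset_right
        (Finset.disjoint_of_subset_right Finset.inter_subset_right hd2))]
    push_cast; ring
  have hb1 := inter_lb Ai (Aj ∪ Bj)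
  have hb2 := inter_lb (Aj ∪ Bj) Bi
  rw [hV, hsplit1, hAi, huj] at hb1
  rw [hV, hsplit2, hBi, huj] at hb2
  -- also need Bi bounds via Aj and Bj separately: use hb2 with h for Aj∩Ai ≤ ...
  -- |Aj∩Ai| ≤ s - δn/2 gives |Bi∩Aj| ≥ ... need split of Aj over Ai∪Bi
  have hsplit3 : ((Aj ∩ (Ai ∪ Bi)).card : ℝ) = (Ai ∩ Aj).card + (Bi ∩ Aj).card := by
    rw [Finset.inter_union_distrib_left, Finset.card_union_of_disjoint
      (Finset.disjoint_of_subset_left Finset.inter_subset_right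
        (Finset.disjoint_of_subset_right Finset.inter_subset_right hd1))]
    rw [Finset.inter_comm Aj Ai, Finset.inter_comm Aj Bi]
    push_cast; ring
  have hsplit4 : ((Bj ∩ (Ai ∪ Bi)).card : ℝ) = (Ai ∩ Bj).card + (Bi ∩ Bj).card := by
    rw [Finset.inter_union_distrib_left, Finset.card_union_of_disjoint
      (Finset.disjoint_of_subset_left Finset.inter_subset_right
        (Finset.disjoint_of_subset_right Finset.inter_subset_right hd1))]
    rw [Finset.inter_comm Bj Ai, Finset.inter_comm Bj Bi]
    push_cast; ring
  have hb3 := inter_lb Aj (Ai ∪ Bi)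
  have hb4 := inter_lb Bj (Ai ∪ Bi)
  rw [hV, hsplit3, hAj, hui] at hb3
  rw [hV, hsplit4, hBj, hui] at hb4
  have heps : ε * n ≤ δ / 8 * n := mul_le_mul_of_nonneg_right hεδ hn'.le
  refine ⟨by linarith, by linarith, by linarith, by linarith⟩
end

section
/- Let 0 < 1/n ≪ d ≪ μ ≪ 1. Let 𝒢 = {G_1, …, G_n} be a collection of bipartite graphs on a common vertex bipartition V = V_1 ∪ V_2 with |V_1| = |V_2| = n, such that for each vertex v ∈ V we have d_{G_i}(v) ≥ (1/2 − μ)n for all but at most dn colors i ∈ [n]. If 𝒢 is 6μ-nice, then 𝒢 contains a rainbow matching ℳ with |E(ℳ)| ≥ n − dn − 2. -/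
open Finset
open scoped Classical

/-- Degree of a left vertex `v ∈ V₁` in the bipartite graph `G` (both sides `Fin n`). -/
noncomputable def dR {n : ℕ} (G : Fin n → Fin n → Prop) (v : Fin n) : ℕ :=
  Nat.card {w : Fin n // G v w}

/-- Degree of a right vertex `w ∈ V₂`. -/
noncomputable def dL {n : ℕ} (G : Fin n → Fin n → Prop) (w : Fin n) : ℕ :=
  Nat.card {v : Fin n // G v w}

/-- `e_G(A, B)`: number of edges between `A ⊆ V₁` and `B ⊆ V₂`. -/
noncomputable def eBip {n : ℕ} (G : Fin n → Fin n → Prop)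
    (A B : Finset (Fin n)) : ℕ :=
  Nat.card {p : Fin n × Fin n // p.1 ∈ A ∧ p.2 ∈ B ∧ G p.1 p.2}

namespace RainbowAux

variable {n : ℕ}

lemma dR_eq (G : Fin n → Fin n → Prop) (v : Fin n) :
    dR G v = (univ.filter fun w => G v w).card := by
  rw [dR, Nat.card_eq_fintype_card, Fintype.card_subtype]

lemma dL_eq (G : Fin n → Fin n → Prop) (w : Fin n) :
    dL G w = (univ.filter fun v => G v w).card := by
  rw [dL, Nat.card_eq_fintype_card, Fintype.card_subtype]

/-- The finset of edges between `A` and `B`. -/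
noncomputable def EBf (G : Fin n → Fin n → Prop) (A B : Finset (Fin n)) :
    Finset (Fin n × Fin n) := (A ×ˢ B).filter fun p => G p.1 p.2

lemma eBip_eq (G : Fin n → Fin n → Prop) (A B : Finset (Fin n)) :
    eBip G A B = (EBf G A B).card := by
  have h : (univ.filter fun p : Fin n × Fin n => p.1 ∈ A ∧ p.2 ∈ B ∧ G p.1 p.2)
      = EBf G A B := by
    ext p
    simp [EBf, mem_product]
    tauto
  rw [eBip, Nat.card_eq_fintype_card, Fintype.card_subtype, h]

lemma EBf_le_split (G : Fin n → Fin n → Prop) (A B A' B' : Finset (Fin n)) :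
    (EBf G A B).card ≤ (EBf G A' B').card + (A \ A').card * B.card + A.card * (B \ B').card := by
  have hsub : EBf G A B ⊆ (EBf G A' B' ∪ (A \ A') ×ˢ B) ∪ A ×ˢ (B \ B') := by
    intro p hp
    rcases Finset.mem_filter.mp hp with ⟨hpAB, hpG⟩
    rcases Finset.mem_product.mp hpAB with ⟨hpA, hpB⟩
    by_cases h1 : p.1 ∈ A'
    · by_cases h2 : p.2 ∈ B'
      · exact Finset.mem_union_left _ (Finset.mem_union_left _
          (Finset.mem_filter.mpr ⟨Finset.mem_product.mpr ⟨h1, h2⟩, hpG⟩))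
      · exact Finset.mem_union_right _
          (Finset.mem_product.mpr ⟨hpA, Finset.mem_sdiff.mpr ⟨hpB, h2⟩⟩)
    · exact Finset.mem_union_left _ (Finset.mem_union_right _
        (Finset.mem_product.mpr ⟨Finset.mem_sdiff.mpr ⟨hpA, h1⟩, hpB⟩))
  calc (EBf G A B).card ≤ ((EBf G A' B' ∪ (A \ A') ×ˢ B) ∪ A ×ˢ (B \ B')).card :=
        Finset.card_le_card hsub
    _ ≤ (EBf G A' B' ∪ (A \ A') ×ˢ B).card + (A ×ˢ (B \ B')).card := Finset.card_union_le _ _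
    _ ≤ (EBf G A' B').card + ((A \ A') ×ˢ B).card + (A ×ˢ (B \ B')).card :=
        Nat.add_le_add_right (Finset.card_union_le _ _) _
    _ = (EBf G A' B').card + (A \ A').card * B.card + A.card * (B \ B').card := by
        rw [Finset.card_product, Finset.card_product]

lemma EBf_card_le (G : Fin n → Fin n → Prop) (A B : Finset (Fin n)) :
    (EBf G A B).card ≤ A.card * B.card := by
  calc (EBf G A B).card ≤ (A ×ˢ B).card := Finset.card_le_card (Finset.filter_subset _ _)
    _ = A.card * B.card := Finset.card_product _ _

/-- Rainbow matching as a set of (colour, left, right) triples. -/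
def IsRM (G : Fin n → Fin n → Fin n → Prop) (M : Finset (Fin n × Fin n × Fin n)) : Prop :=
  (∀ t ∈ M, G t.1 t.2.1 t.2.2) ∧
  (∀ s ∈ M, ∀ t ∈ M, s.1 = t.1 → s = t) ∧
  (∀ s ∈ M, ∀ t ∈ M, s.2.1 = t.2.1 → s = t) ∧
  (∀ s ∈ M, ∀ t ∈ M, s.2.2 = t.2.2 → s = t)

lemma augment {G : Fin n → Fin n → Fin n → Prop} {M : Finset (Fin n × Fin n × Fin n)}
    (hM : IsRM G M) (hmax : ∀ M', IsRM G M' → M'.card ≤ M.card)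
    (T S : Finset (Fin n × Fin n × Fin n)) (hTM : T ⊆ M)
    (hSG : ∀ s ∈ S, G s.1 s.2.1 s.2.2)
    (hS1 : ∀ s ∈ S, ∀ s' ∈ S, s.1 = s'.1 → s = s')
    (hS2 : ∀ s ∈ S, ∀ s' ∈ S, s.2.1 = s'.2.1 → s = s')
    (hS3 : ∀ s ∈ S, ∀ s' ∈ S, s.2.2 = s'.2.2 → s = s')
    (hdisj : ∀ s ∈ S, ∀ t ∈ M, t ∉ T → s.1 ≠ t.1 ∧ s.2.1 ≠ t.2.1 ∧ s.2.2 ≠ t.2.2)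
    (hcard : T.card < S.card) : False := by
  set M' := (M \ T) ∪ S with hM'def
  have hdisjF : Disjoint (M \ T) S := by
    rw [Finset.disjoint_right]
    intro s hsS hsM
    rcases Finset.mem_sdiff.mp hsM with ⟨hsMem, hsT⟩
    exact (hdisj s hsS s hsMem hsT).1 rfl
  have hcard' : M'.card = M.card - T.card + S.card := by
    rw [hM'def, Finset.card_union_of_disjoint hdisjF, Finset.card_sdiff_of_subset hTM]
  have hmem : ∀ t ∈ M', (t ∈ M ∧ t ∉ T) ∨ t ∈ S := by
    intro t ht
    rcases Finset.mem_union.mp ht with h | h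
    · exact Or.inl (Finset.mem_sdiff.mp h)
    · exact Or.inr h
  have hRM' : IsRM G M' := by
    refine ⟨?_, ?_, ?_, ?_⟩
    · intro t ht
      rcases hmem t ht with ⟨h1, _⟩ | h
      · exact hM.1 t h1
      · exact hSG t h
    · intro s hs t ht h
      rcases hmem s hs with ⟨hs1, hs2⟩ | hsS <;> rcases hmem t ht with ⟨ht1, ht2⟩ | htS
      · exact hM.2.1 s hs1 t ht1 h
      · exact absurd h.symm (hdisj t htS s hs1 hs2).1
      · exact absurd h (hdisj s hsS t ht1 ht2).1
      · exact hS1 s hsS t htS h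
    · intro s hs t ht h
      rcases hmem s hs with ⟨hs1, hs2⟩ | hsS <;> rcases hmem t ht with ⟨ht1, ht2⟩ | htS
      · exact hM.2.2.1 s hs1 t ht1 h
      · exact absurd h.symm (hdisj t htS s hs1 hs2).2.1
      · exact absurd h (hdisj s hsS t ht1 ht2).2.1
      · exact hS2 s hsS t htS h
    · intro s hs t ht h
      rcases hmem s hs with ⟨hs1, hs2⟩ | hsS <;> rcases hmem t ht with ⟨ht1, ht2⟩ | htS
      · exact hM.2.2.2 s hs1 t ht1 h
      · exact absurd h.symm (hdisj t htS s hs1 hs2).2.2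
      · exact absurd h (hdisj s hsS t ht1 ht2).2.2
      · exact hS3 s hsS t htS h
  have := hmax M' hRM'
  have hTle : T.card ≤ M.card := Finset.card_le_card hTM
  omega

lemma extract {G : Fin n → Fin n → Fin n → Prop} {M : Finset (Fin n × Fin n × Fin n)}
    (hM : IsRM G M) :
    ∃ I : Finset (Fin n), ∃ a b : Fin n → Fin n,
      Set.InjOn a (I : Set (Fin n)) ∧ Set.InjOn b (I : Set (Fin n)) ∧
      (∀ i ∈ I, G i (a i) (b i)) ∧ I.card = M.card := by
  classical
  set I := M.image Prod.fst with hI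
  have hex : ∀ i ∈ I, ∃ t, t ∈ M ∧ t.1 = i := by
    intro i hi
    rcases Finset.mem_image.mp hi with ⟨t, ht, rfl⟩
    exact ⟨t, ht, rfl⟩
  set pick : Fin n → Fin n × Fin n × Fin n := fun i =>
    if h : ∃ t, t ∈ M ∧ t.1 = i then h.choose else (i, i, i) with hpick
  have hpickM : ∀ i ∈ I, pick i ∈ M ∧ (pick i).1 = i := by
    intro i hi
    have h : ∃ t, t ∈ M ∧ t.1 = i := hex i hi
    simp only [hpick, dif_pos h]
    exact h.choose_spec
  refine ⟨I, fun i => (pick i).2.1, fun i => (pick i).2.2, ?_, ?_, ?_, ?_⟩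
  · intro i hi j hj hij
    have hi' := hpickM i (by exact_mod_cast hi)
    have hj' := hpickM j (by exact_mod_cast hj)
    have := hM.2.2.1 _ hi'.1 _ hj'.1 hij
    rw [← hi'.2, ← hj'.2, this]
  · intro i hi j hj hij
    have hi' := hpickM i (by exact_mod_cast hi)
    have hj' := hpickM j (by exact_mod_cast hj)
    have := hM.2.2.2 _ hi'.1 _ hj'.1 hij
    rw [← hi'.2, ← hj'.2, this]
  · intro i hi
    have hi' := hpickM i hi
    have := hM.1 _ hi'.1
    rwa [hi'.2] at this
  · rw [hI]
    apply Finset.card_image_of_injOn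
    intro s hs t ht h
    exact hM.2.1 s hs t ht h

section smallSets
variable {α β : Type*} [DecidableEq α] [DecidableEq β]

lemma mem2 {s s₁ s₂ : α} (h : s ∈ ({s₁, s₂} : Finset α)) : s = s₁ ∨ s = s₂ := by simpa using h

lemma mem3 {s s₁ s₂ s₃ : α} (h : s ∈ ({s₁, s₂, s₃} : Finset α)) :
    s = s₁ ∨ s = s₂ ∨ s = s₃ := by simpa using h

lemma mem4 {s s₁ s₂ s₃ s₄ : α} (h : s ∈ ({s₁, s₂, s₃, s₄} : Finset α)) :
    s = s₁ ∨ s = s₂ ∨ s = s₃ ∨ s = s₄ := by simpa using h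

lemma ball1 {P : α → Prop} {s₁ : α} (h1 : P s₁) : ∀ s ∈ ({s₁} : Finset α), P s := by
  intro s hs; rw [Finset.mem_singleton] at hs; subst hs; exact h1

lemma ball2 {P : α → Prop} {s₁ s₂ : α} (h1 : P s₁) (h2 : P s₂) :
    ∀ s ∈ ({s₁, s₂} : Finset α), P s := by
  intro s hs; rcases mem2 hs with rfl | rfl <;> assumption

lemma ball3 {P : α → Prop} {s₁ s₂ s₃ : α} (h1 : P s₁) (h2 : P s₂) (h3 : P s₃) :
    ∀ s ∈ ({s₁, s₂, s₃} : Finset α), P s := by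
  intro s hs; rcases mem3 hs with rfl | rfl | rfl <;> assumption

lemma ball4 {P : α → Prop} {s₁ s₂ s₃ s₄ : α} (h1 : P s₁) (h2 : P s₂) (h3 : P s₃) (h4 : P s₄) :
    ∀ s ∈ ({s₁, s₂, s₃, s₄} : Finset α), P s := by
  intro s hs; rcases mem4 hs with rfl | rfl | rfl | rfl <;> assumption

lemma injOn1 (f : α → β) {s₁ : α} :
    ∀ s ∈ ({s₁} : Finset α), ∀ s' ∈ ({s₁} : Finset α), f s = f s' → s = s' := by
  intro s hs s' hs' _
  rw [Finset.mem_singleton] at hs hs'; rw [hs, hs']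

lemma injOn2 (f : α → β) {s₁ s₂ : α} (h12 : f s₁ ≠ f s₂) :
    ∀ s ∈ ({s₁, s₂} : Finset α), ∀ s' ∈ ({s₁, s₂} : Finset α), f s = f s' → s = s' := by
  intro s hs s' hs' h
  rcases mem2 hs with rfl | rfl <;> rcases mem2 hs' with rfl | rfl <;>
    first
      | rfl
      | (exact absurd h (by assumption))
      | (exact absurd h.symm (by assumption))

lemma injOn3 (f : α → β) {s₁ s₂ s₃ : α} (h12 : f s₁ ≠ f s₂) (h13 : f s₁ ≠ f s₃)
    (h23 : f s₂ ≠ f s₃) :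
    ∀ s ∈ ({s₁, s₂, s₃} : Finset α), ∀ s' ∈ ({s₁, s₂, s₃} : Finset α), f s = f s' → s = s' := by
  intro s hs s' hs' h
  rcases mem3 hs with rfl | rfl | rfl <;> rcases mem3 hs' with rfl | rfl | rfl <;>
    first
      | rfl
      | (exact absurd h (by assumption))
      | (exact absurd h.symm (by assumption))

lemma injOn4 (f : α → β) {s₁ s₂ s₃ s₄ : α} (h12 : f s₁ ≠ f s₂) (h13 : f s₁ ≠ f s₃)
    (h14 : f s₁ ≠ f s₄) (h23 : f s₂ ≠ f s₃) (h24 : f s₂ ≠ f s₄) (h34 : f s₃ ≠ f s₄) :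
    ∀ s ∈ ({s₁, s₂, s₃, s₄} : Finset α), ∀ s' ∈ ({s₁, s₂, s₃, s₄} : Finset α),
      f s = f s' → s = s' := by
  intro s hs s' hs' h
  rcases mem4 hs with rfl | rfl | rfl | rfl <;> rcases mem4 hs' with rfl | rfl | rfl | rfl <;>
    first
      | rfl
      | (exact absurd h (by assumption))
      | (exact absurd h.symm (by assumption))

lemma card2_le (f : α → β) {s₁ s₂ : α} (h12 : f s₁ ≠ f s₂) :
    2 ≤ ({s₁, s₂} : Finset α).card := by
  have himg : ({s₁, s₂} : Finset α).image f = {f s₁, f s₂} := by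
    simp [Finset.image_insert]
  have h2 : ({f s₁, f s₂} : Finset β).card = 2 := by
    rw [Finset.card_insert_of_notMem (by simp [h12]), Finset.card_singleton]
  calc 2 = (({s₁, s₂} : Finset α).image f).card := by rw [himg, h2]
    _ ≤ _ := Finset.card_image_le

lemma card3_le (f : α → β) {s₁ s₂ s₃ : α} (h12 : f s₁ ≠ f s₂) (h13 : f s₁ ≠ f s₃)
    (h23 : f s₂ ≠ f s₃) : 3 ≤ ({s₁, s₂, s₃} : Finset α).card := by
  have himg : ({s₁, s₂, s₃} : Finset α).image f = {f s₁, f s₂, f s₃} := by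
    simp [Finset.image_insert]
  have h2 : ({f s₁, f s₂, f s₃} : Finset β).card = 3 := by
    rw [Finset.card_insert_of_notMem (by simp [h12, h13]),
      Finset.card_insert_of_notMem (by simp [h23]), Finset.card_singleton]
  calc 3 = (({s₁, s₂, s₃} : Finset α).image f).card := by rw [himg, h2]
    _ ≤ _ := Finset.card_image_le

lemma card4_le (f : α → β) {s₁ s₂ s₃ s₄ : α} (h12 : f s₁ ≠ f s₂) (h13 : f s₁ ≠ f s₃)
    (h14 : f s₁ ≠ f s₄) (h23 : f s₂ ≠ f s₃) (h24 : f s₂ ≠ f s₄) (h34 : f s₃ ≠ f s₄) :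
    4 ≤ ({s₁, s₂, s₃, s₄} : Finset α).card := by
  have himg : ({s₁, s₂, s₃, s₄} : Finset α).image f = {f s₁, f s₂, f s₃, f s₄} := by
    simp [Finset.image_insert]
  have h2 : ({f s₁, f s₂, f s₃, f s₄} : Finset β).card = 4 := by
    rw [Finset.card_insert_of_notMem (by simp [h12, h13, h14]),
      Finset.card_insert_of_notMem (by simp [h23, h24]),
      Finset.card_insert_of_notMem (by simp [h34]), Finset.card_singleton]
  calc 4 = (({s₁, s₂, s₃, s₄} : Finset α).image f).card := by rw [himg, h2]
    _ ≤ _ := Finset.card_image_le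

lemma card1_ub {s₁ : α} : ({s₁} : Finset α).card ≤ 1 := by simp

lemma card2_ub {s₁ s₂ : α} : ({s₁, s₂} : Finset α).card ≤ 2 :=
  le_trans (Finset.card_insert_le _ _) (by simp)

lemma card3_ub {s₁ s₂ s₃ : α} : ({s₁, s₂, s₃} : Finset α).card ≤ 3 :=
  le_trans (Finset.card_insert_le _ _) (by
    have := card2_ub (s₁ := s₂) (s₂ := s₃) (α := α)
    omega)

end smallSets

end RainbowAux

open RainbowAux

set_option maxHeartbeats 2000000 in
/-- **Almost-perfect rainbow matchings from niceness.**  For `0 < 1/n ≪ d ≪ μ ≪ 1`: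
let `𝒢 = {G 1, …, G n}` be bipartite graphs on `V₁ ∪ V₂` (both of size `n`) such that
every vertex has degree at least `(1/2 − μ)n` in all but at most `dn` of the graphs.
If `𝒢` is `6μ`-nice (for all `A ⊆ V₁`, `B ⊆ V₂` of size `⌊n/2⌋` the total number of
edges between `A` and `B` over all colours is at least `6μn³`), then `𝒢` has a rainbow
matching — pairwise vertex-disjoint edges `(a i, b i) ∈ G i` for the colours `i` in some
set `I` — of size at least `n − dn − 2`. -/
theorem nice_collection_rainbow_matching :
    ∃ μ0 : ℝ, 0 < μ0 ∧ ∀ μ : ℝ, 0 < μ → μ ≤ μ0 →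
    ∃ d0 : ℝ, 0 < d0 ∧ ∀ d : ℝ, 0 < d → d ≤ d0 →
    ∃ n0 : ℕ, ∀ n : ℕ, n0 ≤ n →
    ∀ G : Fin n → Fin n → Fin n → Prop,
    (∀ v : Fin n,
      ((univ.filter (fun i : Fin n => (dR (G i) v : ℝ) < (1/2 - μ) * n)).card : ℝ)
        ≤ d * n) →
    (∀ w : Fin n,
      ((univ.filter (fun i : Fin n => (dL (G i) w : ℝ) < (1/2 - μ) * n)).card : ℝ)
        ≤ d * n) →
    (∀ A B : Finset (Fin n), A.card = n / 2 → B.card = n / 2 →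
      6 * μ * (n : ℝ) ^ 3 ≤ ∑ i : Fin n, (eBip (G i) A B : ℝ)) →
    ∃ I : Finset (Fin n), ∃ a b : Fin n → Fin n,
      Set.InjOn a (I : Set (Fin n)) ∧ Set.InjOn b (I : Set (Fin n)) ∧
      (∀ i ∈ I, G i (a i) (b i)) ∧
      (n : ℝ) - d * n - 2 ≤ (I.card : ℝ) := by
  refine ⟨1/100, by norm_num, fun μ hμ hμ0 => ⟨1, by norm_num, fun d hd hd1 => ?_⟩⟩
  refine ⟨⌈(4:ℝ)/μ⌉₊, fun n hn G hdegR hdegL hnice => ?_⟩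
  -- numeric setup
  have hnR : (4:ℝ)/μ ≤ (n:ℝ) := by
    calc (4:ℝ)/μ ≤ (⌈(4:ℝ)/μ⌉₊ : ℝ) := Nat.le_ceil _
      _ ≤ n := by exact_mod_cast hn
  have hμn : 4 ≤ μ * n := by
    rw [div_le_iff₀ hμ] at hnR
    linarith
  have hn400 : (400:ℝ) ≤ n := by
    have h1 : (400:ℝ) ≤ 4/μ := by
      rw [le_div_iff₀ hμ]
      linarith
    linarith
  have hnpos : (0:ℝ) < n := by linarith
  have hdn0 : 0 ≤ d * n := by positivity
  have hcard_le : ∀ s : Finset (Fin n), s.card ≤ n := fun s =>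
    le_trans (Finset.card_le_univ s) (by simp)
  have hcard_leR : ∀ s : Finset (Fin n), (s.card:ℝ) ≤ n := fun s => by
    exact_mod_cast hcard_le s
  -- maximum rainbow matching
  have hne : ((univ : Finset (Finset (Fin n × Fin n × Fin n))).filter fun M => IsRM G M).Nonempty :=
    ⟨∅, Finset.mem_filter.mpr ⟨mem_univ _, ⟨by simp, by simp, by simp, by simp⟩⟩⟩
  obtain ⟨M, hMf, hmax'⟩ := Finset.exists_max_image
    ((univ : Finset (Finset (Fin n × Fin n × Fin n))).filter fun M => IsRM G M)
    Finset.card hne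
  have hM : IsRM G M := (Finset.mem_filter.mp hMf).2
  have hmax : ∀ M', IsRM G M' → M'.card ≤ M.card := fun M' h =>
    hmax' M' (Finset.mem_filter.mpr ⟨mem_univ _, h⟩)
  obtain ⟨I, af, bf, hinja, hinjb, hedges, hIcard⟩ := extract hM
  refine ⟨I, af, bf, hinja, hinjb, hedges, ?_⟩
  rw [hIcard]
  by_contra hcon
  push_neg at hcon
  -- hcon : (M.card : ℝ) < n - d*n - 2
  set C := M.image Prod.fst with hCdef
  set L := M.image (fun t => t.2.1) with hLdef
  set R := M.image (fun t => t.2.2) with hRdef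
  have hCcard : C.card = M.card := Finset.card_image_of_injOn fun s hs t ht h => hM.2.1 s hs t ht h
  have hLcard : L.card = M.card := Finset.card_image_of_injOn fun s hs t ht h => hM.2.2.1 s hs t ht h
  have hRcard : R.card = M.card := Finset.card_image_of_injOn fun s hs t ht h => hM.2.2.2 s hs t ht h
  have hMln : M.card < n := by
    have h1 : (M.card:ℝ) < n := by linarith
    exact_mod_cast h1
  have hMlnR : (M.card:ℝ) ≤ n := le_of_lt (by exact_mod_cast hMln)
  have hmemC : ∀ t ∈ M, t.1 ∈ C := fun t ht => Finset.mem_image_of_mem _ ht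
  have hmemL : ∀ t ∈ M, t.2.1 ∈ L := fun t ht => Finset.mem_image_of_mem _ ht
  have hmemR : ∀ t ∈ M, t.2.2 ∈ R := fun t ht => Finset.mem_image_of_mem _ ht
  -- free vertices
  obtain ⟨a, haL⟩ : ∃ a, a ∉ L := by
    have h1 : (univ \ L).Nonempty := by
      rw [← Finset.card_pos, Finset.card_sdiff_of_subset (Finset.subset_univ _)]
      have h2 : L.card < (univ : Finset (Fin n)).card := by
        rw [hLcard]
        simpa using hMln
      omega
    obtain ⟨a, ha⟩ := h1
    exact ⟨a, (Finset.mem_sdiff.mp ha).2⟩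
  obtain ⟨b, hbR⟩ : ∃ b, b ∉ R := by
    have h1 : (univ \ R).Nonempty := by
      rw [← Finset.card_pos, Finset.card_sdiff_of_subset (Finset.subset_univ _)]
      have h2 : R.card < (univ : Finset (Fin n)).card := by
        rw [hRcard]
        simpa using hMln
      omega
    obtain ⟨b, hb⟩ := h1
    exact ⟨b, (Finset.mem_sdiff.mp hb).2⟩
  set F := univ \ C with hFdef
  have hFcardR : (F.card:ℝ) = n - M.card := by
    rw [hFdef, Finset.card_sdiff_of_subset (Finset.subset_univ _), hCcard, Finset.card_univ,
      Fintype.card_fin, Nat.cast_sub hMln.le]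
  have hFgt : d*n + 2 < (F.card:ℝ) := by rw [hFcardR]; linarith
  have hFC : ∀ i ∈ F, i ∉ C := fun i hi => (Finset.mem_sdiff.mp hi).2
  -- colour-picking helpers
  have hpickR : ∀ (X : Finset (Fin n)), ((d*n : ℝ) < X.card) → ∀ v : Fin n,
      ∃ i ∈ X, (1/2-μ)*n ≤ (dR (G i) v : ℝ) := by
    intro X hX v
    have h2 := Finset.card_le_card_sdiff_add_card
      (s := X) (t := univ.filter fun i => (dR (G i) v : ℝ) < (1/2 - μ) * n)
    have h3 := hdegR v
    have h4 : (0:ℝ) <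
        ((X \ univ.filter fun i => (dR (G i) v : ℝ) < (1/2 - μ) * n).card : ℝ) := by
      have hcast : (X.card:ℝ) ≤
          ((X \ univ.filter fun i => (dR (G i) v : ℝ) < (1/2 - μ) * n).card : ℝ)
          + ((univ.filter fun i => (dR (G i) v : ℝ) < (1/2 - μ) * n).card : ℝ) := by
        exact_mod_cast h2
      linarith
    have h5 : (X \ univ.filter fun i => (dR (G i) v : ℝ) < (1/2 - μ) * n).Nonempty := by
      rw [← Finset.card_pos]
      exact_mod_cast h4
    obtain ⟨i, hi⟩ := h5
    rcases Finset.mem_sdiff.mp hi with ⟨hiX, hiB⟩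
    exact ⟨i, hiX, not_lt.mp fun hlt => hiB (Finset.mem_filter.mpr ⟨Finset.mem_univ _, hlt⟩)⟩
  have hpickL : ∀ (X : Finset (Fin n)), ((d*n : ℝ) < X.card) → ∀ v : Fin n,
      ∃ i ∈ X, (1/2-μ)*n ≤ (dL (G i) v : ℝ) := by
    intro X hX v
    have h2 := Finset.card_le_card_sdiff_add_card
      (s := X) (t := univ.filter fun i => (dL (G i) v : ℝ) < (1/2 - μ) * n)
    have h3 := hdegL v
    have h4 : (0:ℝ) <
        ((X \ univ.filter fun i => (dL (G i) v : ℝ) < (1/2 - μ) * n).card : ℝ) := by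
      have hcast : (X.card:ℝ) ≤
          ((X \ univ.filter fun i => (dL (G i) v : ℝ) < (1/2 - μ) * n).card : ℝ)
          + ((univ.filter fun i => (dL (G i) v : ℝ) < (1/2 - μ) * n).card : ℝ) := by
        exact_mod_cast h2
      linarith
    have h5 : (X \ univ.filter fun i => (dL (G i) v : ℝ) < (1/2 - μ) * n).Nonempty := by
      rw [← Finset.card_pos]
      exact_mod_cast h4
    obtain ⟨i, hi⟩ := h5
    rcases Finset.mem_sdiff.mp hi with ⟨hiX, hiB⟩
    exact ⟨i, hiX, not_lt.mp fun hlt => hiB (Finset.mem_filter.mpr ⟨Finset.mem_univ _, hlt⟩)⟩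
  -- pick i₁, i₂
  obtain ⟨i₁, hi₁F, hi₁deg⟩ := hpickR F (by linarith) a
  have hFm1 : (d*n : ℝ) < ((F \ {i₁}).card : ℝ) := by
    have h2 := Finset.card_le_card_sdiff_add_card (s := F) (t := ({i₁} : Finset (Fin n)))
    have hcast : (F.card:ℝ) ≤ ((F \ {i₁}).card : ℝ) + 1 := by
      have h3 : (({i₁} : Finset (Fin n)).card : ℝ) = 1 := by simp
      have h4 : (F.card:ℝ) ≤ ((F \ {i₁}).card : ℝ) + (({i₁} : Finset (Fin n)).card : ℝ) := by
        exact_mod_cast h2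
      linarith
    linarith
  obtain ⟨i₂, hi₂mem, hi₂deg⟩ := hpickL (F \ {i₁}) hFm1 b
  rcases Finset.mem_sdiff.mp hi₂mem with ⟨hi₂F, hi₂ne'⟩
  have hne12 : i₁ ≠ i₂ := fun h => hi₂ne' (by simp [h])
  have hi₁C : i₁ ∉ C := hFC _ hi₁F
  have hi₂C : i₂ ∉ C := hFC _ hi₂F
  -- neighbourhoods
  set NB₁ := univ.filter (fun y => G i₁ a y) with hNB₁def
  set NA₂ := univ.filter (fun x => G i₂ x b) with hNA₂def
  have hNB₁card : (1/2-μ)*n ≤ (NB₁.card:ℝ) := by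
    rw [hNB₁def, ← dR_eq]
    exact hi₁deg
  have hNA₂card : (1/2-μ)*n ≤ (NA₂.card:ℝ) := by
    rw [hNA₂def, ← dL_eq]
    exact hi₂deg
  have hNB₁edge : ∀ y ∈ NB₁, G i₁ a y := fun y hy => (Finset.mem_filter.mp hy).2
  have hNA₂edge : ∀ x ∈ NA₂, G i₂ x b := fun x hx => (Finset.mem_filter.mp hx).2
  -- nonmembership helpers
  have hnotC : ∀ i, i ∉ C → ∀ t ∈ M, i ≠ t.1 := fun i hi t ht h => hi (by rw [h]; exact hmemC t ht)
  have hnotLa : ∀ t ∈ M, a ≠ t.2.1 := fun t ht h => haL (by rw [h]; exact hmemL t ht)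
  have hnotRb : ∀ t ∈ M, b ≠ t.2.2 := fun t ht h => hbR (by rw [h]; exact hmemR t ht)
  have hLne : ∀ t ∈ M, ∀ t' ∈ M, t ≠ t' → t.2.1 ≠ t'.2.1 :=
    fun t ht t' ht' hne h => hne (hM.2.2.1 t ht t' ht' h)
  have hRne : ∀ t ∈ M, ∀ t' ∈ M, t ≠ t' → t.2.2 ≠ t'.2.2 :=
    fun t ht t' ht' hne h => hne (hM.2.2.2 t ht t' ht' h)
  -- E1, E2
  have hE1 : ∀ y ∈ NB₁, y ∈ R := by
    intro y hy
    by_contra hyR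
    refine augment hM hmax ∅ {(i₁, a, y)} (Finset.empty_subset _) (ball1 (hNB₁edge y hy))
      (injOn1 _) (injOn1 _) (injOn1 _) ?_ (by simp)
    refine ball1 ?_
    intro t htM _
    exact ⟨hnotC i₁ hi₁C t htM, hnotLa t htM, fun (h : y = t.2.2) => hyR (by rw [h]; exact hmemR t htM)⟩
  have hE2 : ∀ x ∈ NA₂, x ∈ L := by
    intro x hx
    by_contra hxL
    refine augment hM hmax ∅ {(i₂, x, b)} (Finset.empty_subset _) (ball1 (hNA₂edge x hx))
      (injOn1 _) (injOn1 _) (injOn1 _) ?_ (by simp)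
    refine ball1 ?_
    intro t htM _
    exact ⟨hnotC i₂ hi₂C t htM, fun (h : x = t.2.1) => hxL (by rw [h]; exact hmemL t htM), hnotRb t htM⟩
  -- the two key sub-matchings
  set T₁ := M.filter (fun t => t.2.2 ∈ NB₁) with hT₁def
  set T₂ := M.filter (fun t => t.2.1 ∈ NA₂) with hT₂def
  have hT₁M : T₁ ⊆ M := Finset.filter_subset _ _
  have hT₂M : T₂ ⊆ M := Finset.filter_subset _ _
  have hT₁mem : ∀ t ∈ T₁, t ∈ M ∧ G i₁ a t.2.2 := fun t ht =>
    ⟨(Finset.mem_filter.mp ht).1, hNB₁edge _ (Finset.mem_filter.mp ht).2⟩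
  have hT₂mem : ∀ t ∈ T₂, t ∈ M ∧ G i₂ t.2.1 b := fun t ht =>
    ⟨(Finset.mem_filter.mp ht).1, hNA₂edge _ (Finset.mem_filter.mp ht).2⟩
  -- E3 : disjointness
  have hd12 : ∀ t ∈ T₁, t ∉ T₂ := by
    intro t ht1 ht2
    obtain ⟨htM, hG1⟩ := hT₁mem t ht1
    obtain ⟨_, hG2⟩ := hT₂mem t ht2
    refine augment hM hmax {t} {(i₁, a, t.2.2), (i₂, t.2.1, b)} (by simp [htM])
      (ball2 hG1 hG2) (injOn2 Prod.fst hne12)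
      (injOn2 (fun s : Fin n × Fin n × Fin n => s.2.1) (hnotLa t htM))
      (injOn2 (fun s : Fin n × Fin n × Fin n => s.2.2) (Ne.symm (hnotRb t htM))) ?_ ?_
    · refine ball2 ?_ ?_
      · intro t' ht'M hnt
        exact ⟨hnotC i₁ hi₁C t' ht'M, hnotLa t' ht'M,
          fun h => hnt (Finset.mem_singleton.mpr (hM.2.2.2 t htM t' ht'M h).symm)⟩
      · intro t' ht'M hnt
        exact ⟨hnotC i₂ hi₂C t' ht'M,
          fun h => hnt (Finset.mem_singleton.mpr (hM.2.2.1 t htM t' ht'M h).symm),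
          hnotRb t' ht'M⟩
    · calc ({t} : Finset _).card = 1 := Finset.card_singleton _
        _ < 2 := one_lt_two
        _ ≤ _ := card2_le Prod.fst hne12
  have hd21 : ∀ t ∈ T₂, t ∉ T₁ := fun t ht2 ht1 => hd12 t ht1 ht2
  -- cards of T₁, T₂
  have himg1 : T₁.image (fun t => t.2.2) = NB₁ := by
    apply Finset.Subset.antisymm
    · intro y hy
      rcases Finset.mem_image.mp hy with ⟨t, ht, rfl⟩
      exact (Finset.mem_filter.mp ht).2
    · intro y hy
      rcases Finset.mem_image.mp (hE1 y hy) with ⟨t, htM, rfl⟩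
      exact Finset.mem_image_of_mem _ (Finset.mem_filter.mpr ⟨htM, hy⟩)
  have himg2 : T₂.image (fun t => t.2.1) = NA₂ := by
    apply Finset.Subset.antisymm
    · intro x hx
      rcases Finset.mem_image.mp hx with ⟨t, ht, rfl⟩
      exact (Finset.mem_filter.mp ht).2
    · intro x hx
      rcases Finset.mem_image.mp (hE2 x hx) with ⟨t, htM, rfl⟩
      exact Finset.mem_image_of_mem _ (Finset.mem_filter.mpr ⟨htM, hx⟩)
  have hT₁card : T₁.card = NB₁.card := by
    rw [← himg1]
    exact (Finset.card_image_of_injOn fun s hs t ht h =>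
      hM.2.2.2 s (hT₁M hs) t (hT₁M ht) h).symm
  have hT₂card : T₂.card = NA₂.card := by
    rw [← himg2]
    exact (Finset.card_image_of_injOn fun s hs t ht h =>
      hM.2.2.1 s (hT₂M hs) t (hT₂M ht) h).symm
  have hT₁cardR : (1/2-μ)*n ≤ (T₁.card:ℝ) := by rw [hT₁card]; exact hNB₁card
  have hT₂cardR : (1/2-μ)*n ≤ (T₂.card:ℝ) := by rw [hT₂card]; exact hNA₂card
  set A₁ := T₁.image (fun t => t.2.1) with hA₁def
  set B₂ := T₂.image (fun t => t.2.2) with hB₂def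
  have hA₁card : A₁.card = T₁.card := Finset.card_image_of_injOn fun s hs t ht h =>
    hM.2.2.1 s (hT₁M hs) t (hT₁M ht) h
  have hB₂card : B₂.card = T₂.card := Finset.card_image_of_injOn fun s hs t ht h =>
    hM.2.2.2 s (hT₂M hs) t (hT₂M ht) h
  -- junk set
  set J := (M \ T₁) \ T₂ with hJdef
  have hsub2 : T₂ ⊆ M \ T₁ := fun t ht => Finset.mem_sdiff.mpr ⟨hT₂M ht, hd21 t ht⟩
  have hJM : T₁.card + T₂.card + J.card = M.card := by
    have h1 : (M \ T₁).card = M.card - T₁.card := Finset.card_sdiff_of_subset hT₁M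
    have h3 : J.card = (M \ T₁).card - T₂.card := Finset.card_sdiff_of_subset hsub2
    have h4 := Finset.card_le_card hT₁M
    have h5 := Finset.card_le_card hsub2
    omega
  -- E4: no usable edge for a genuinely free colour
  have hE4 : ∀ c, c ∉ C → c ≠ i₁ → c ≠ i₂ → ∀ t' ∈ T₁, ∀ t'' ∈ T₂, ¬ G c t'.2.1 t''.2.2 := by
    intro c hcC hc1 hc2 t' ht' t'' ht'' hedge
    obtain ⟨ht'M, hG1⟩ := hT₁mem t' ht'
    obtain ⟨ht''M, hG2⟩ := hT₂mem t'' ht''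
    have hne' : t' ≠ t'' := fun h => hd12 t' ht' (h ▸ ht'')
    refine augment hM hmax {t', t''} {(i₁, a, t'.2.2), (i₂, t''.2.1, b), (c, t'.2.1, t''.2.2)}
      ?_ (ball3 hG1 hG2 hedge)
      (injOn3 Prod.fst hne12 (Ne.symm hc1) (Ne.symm hc2))
      (injOn3 (fun s : Fin n × Fin n × Fin n => s.2.1) (hnotLa t'' ht''M) (hnotLa t' ht'M)
        (hLne t'' ht''M t' ht'M (Ne.symm hne')))
      (injOn3 (fun s : Fin n × Fin n × Fin n => s.2.2) (Ne.symm (hnotRb t' ht'M))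
        (hRne t' ht'M t'' ht''M hne') (hnotRb t'' ht''M))
      ?_ ?_
    · intro s hs
      rcases mem2 hs with rfl | rfl
      exacts [ht'M, ht''M]
    · refine ball3 ?_ ?_ ?_
      · intro t htM hnt
        refine ⟨hnotC i₁ hi₁C t htM, hnotLa t htM, fun h => hnt ?_⟩
        exact Finset.mem_insert.mpr (Or.inl (hM.2.2.2 t' ht'M t htM h).symm)
      · intro t htM hnt
        refine ⟨hnotC i₂ hi₂C t htM, fun h => hnt ?_, hnotRb t htM⟩
        exact Finset.mem_insert.mpr (Or.inr (Finset.mem_singleton.mpr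
          (hM.2.2.1 t'' ht''M t htM h).symm))
      · intro t htM hnt
        refine ⟨fun (h : c = t.1) => hcC (by rw [h]; exact hmemC t htM), fun h => hnt ?_, fun h => hnt ?_⟩
        · exact Finset.mem_insert.mpr (Or.inl (hM.2.2.1 t' ht'M t htM h).symm)
        · exact Finset.mem_insert.mpr (Or.inr (Finset.mem_singleton.mpr
            (hM.2.2.2 t'' ht''M t htM h).symm))
    · calc ({t', t''} : Finset _).card ≤ 2 := card2_ub
        _ < 3 := by norm_num
        _ ≤ _ := card3_le Prod.fst hne12 (Ne.symm hc1) (Ne.symm hc2)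
  have hzero : ∀ c ∈ F, c ≠ i₁ → c ≠ i₂ → EBf (G c) A₁ B₂ = ∅ := by
    intro c hc h1 h2
    rw [Finset.eq_empty_iff_forall_notMem]
    intro p hp
    rcases Finset.mem_filter.mp hp with ⟨hpAB, hpG⟩
    rcases Finset.mem_product.mp hpAB with ⟨hpA, hpB⟩
    rcases Finset.mem_image.mp hpA with ⟨t', ht', hp1⟩
    rcases Finset.mem_image.mp hpB with ⟨t'', ht'', hp2⟩
    exact hE4 c (hFC c hc) h1 h2 t' ht' t'' ht'' (by rw [hp1, hp2]; exact hpG)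
  -- key bound for colours used in T₂
  have hkeyT₂ : ∀ tc ∈ T₂, ((EBf (G tc.1) A₁ B₂).card : ℝ) ≤ n * (2*μ*n + 1) := by
    intro tc htcT₂
    obtain ⟨htcM, htcG⟩ := hT₂mem tc htcT₂
    have hcC : tc.1 ∈ C := hmemC tc htcM
    have hFF : (d*n : ℝ) < ((F \ {i₁, i₂}).card : ℝ) := by
      have h2 := Finset.card_le_card_sdiff_add_card (s := F) (t := ({i₁, i₂} : Finset (Fin n)))
      have h3 : (({i₁, i₂} : Finset (Fin n)).card : ℝ) ≤ 2 := by exact_mod_cast card2_ub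
      have h4 : (F.card:ℝ) ≤ ((F \ {i₁, i₂}).card : ℝ)
          + (({i₁, i₂} : Finset (Fin n)).card : ℝ) := by exact_mod_cast h2
      linarith
    obtain ⟨i₅, hi₅mem, hi₅deg⟩ := hpickL (F \ {i₁, i₂}) hFF tc.2.2
    rcases Finset.mem_sdiff.mp hi₅mem with ⟨hi₅F, hi₅nm⟩
    have hi₅ne1 : i₅ ≠ i₁ := fun h => hi₅nm (by simp [h])
    have hi₅ne2 : i₅ ≠ i₂ := fun h => hi₅nm (by simp [h])
    have hi₅C : i₅ ∉ C := hFC _ hi₅F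
    set NL := univ.filter (fun x => G i₅ x tc.2.2) with hNLdef
    have hNLcard : (1/2-μ)*n ≤ (NL.card:ℝ) := by
      rw [hNLdef, ← dL_eq]
      exact hi₅deg
    have hNLedge : ∀ x ∈ NL, G i₅ x tc.2.2 := fun x hx => (Finset.mem_filter.mp hx).2
    have hE5 : ∀ x ∈ NL, x ∈ L := by
      intro x hx
      by_contra hxL
      refine augment hM hmax {tc} {(i₂, tc.2.1, b), (i₅, x, tc.2.2)} (by simp [htcM])
        (ball2 htcG (hNLedge x hx))
        (injOn2 Prod.fst (Ne.symm hi₅ne2))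
        (injOn2 (fun s : Fin n × Fin n × Fin n => s.2.1)
          (fun (h : tc.2.1 = x) => hxL (by rw [← h]; exact hmemL tc htcM)))
        (injOn2 (fun s : Fin n × Fin n × Fin n => s.2.2) (hnotRb tc htcM)) ?_ ?_
      · refine ball2 ?_ ?_
        · intro t htM hnt
          exact ⟨hnotC i₂ hi₂C t htM,
            fun h => hnt (Finset.mem_singleton.mpr (hM.2.2.1 tc htcM t htM h).symm),
            hnotRb t htM⟩
        · intro t htM hnt
          exact ⟨hnotC i₅ hi₅C t htM,
            fun (h : x = t.2.1) => hxL (by rw [h]; exact hmemL t htM),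
            fun h => hnt (Finset.mem_singleton.mpr (hM.2.2.2 tc htcM t htM h).symm)⟩
      · calc ({tc} : Finset _).card = 1 := Finset.card_singleton _
          _ < 2 := one_lt_two
          _ ≤ _ := card2_le Prod.fst (Ne.symm hi₅ne2)
    have hE6 : ∀ t ∈ T₁, t.2.1 ∉ NL := by
      intro t ht hmem
      obtain ⟨htM, htG⟩ := hT₁mem t ht
      have htne : t ≠ tc := fun h => hd21 tc htcT₂ (h ▸ ht)
      refine augment hM hmax {tc, t} {(i₂, tc.2.1, b), (i₁, a, t.2.2), (i₅, t.2.1, tc.2.2)} ?_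
        (ball3 htcG htG (hNLedge _ hmem))
        (injOn3 Prod.fst (Ne.symm hne12) (Ne.symm hi₅ne2) (Ne.symm hi₅ne1))
        (injOn3 (fun s : Fin n × Fin n × Fin n => s.2.1) (Ne.symm (hnotLa tc htcM))
          (hLne tc htcM t htM (Ne.symm htne)) (hnotLa t htM))
        (injOn3 (fun s : Fin n × Fin n × Fin n => s.2.2) (hnotRb t htM) (hnotRb tc htcM)
          (hRne t htM tc htcM htne)) ?_ ?_
      · intro s hs
        rcases mem2 hs with rfl | rfl
        exacts [htcM, htM]
      · refine ball3 ?_ ?_ ?_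
        · intro t' ht'M hnt
          refine ⟨hnotC i₂ hi₂C t' ht'M, fun h => hnt ?_, hnotRb t' ht'M⟩
          exact Finset.mem_insert.mpr (Or.inl (hM.2.2.1 tc htcM t' ht'M h).symm)
        · intro t' ht'M hnt
          refine ⟨hnotC i₁ hi₁C t' ht'M, hnotLa t' ht'M, fun h => hnt ?_⟩
          exact Finset.mem_insert.mpr (Or.inr (Finset.mem_singleton.mpr
            (hM.2.2.2 t htM t' ht'M h).symm))
        · intro t' ht'M hnt
          refine ⟨hnotC i₅ hi₅C t' ht'M, fun h => hnt ?_, fun h => hnt ?_⟩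
          · exact Finset.mem_insert.mpr (Or.inr (Finset.mem_singleton.mpr
              (hM.2.2.1 t htM t' ht'M h).symm))
          · exact Finset.mem_insert.mpr (Or.inl (hM.2.2.2 tc htcM t' ht'M h).symm)
      · calc ({tc, t} : Finset _).card ≤ 2 := card2_ub
          _ < 3 := by norm_num
          _ ≤ _ := card3_le Prod.fst (Ne.symm hne12) (Ne.symm hi₅ne2) (Ne.symm hi₅ne1)
    have hE7 : ∀ t'' ∈ T₂, t''.2.2 ≠ tc.2.2 → ∀ t' ∈ T₁, G tc.1 t'.2.1 t''.2.2 →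
        t''.2.1 ∉ NL := by
      intro t'' ht'' hne'' t' ht' hedge hmem
      obtain ⟨ht''M, ht''G⟩ := hT₂mem t'' ht''
      obtain ⟨ht'M, ht'G⟩ := hT₁mem t' ht'
      have ht'tc : t' ≠ tc := fun h => hd21 tc htcT₂ (h ▸ ht')
      have ht''tc : t'' ≠ tc := fun h => hne'' (by rw [h])
      have ht't'' : t' ≠ t'' := fun h => hd12 t' ht' (h ▸ ht'')
      have hmemT : ∀ t, t = tc ∨ t = t' ∨ t = t'' → t ∈ ({tc, t', t''} : Finset _) :=
        fun t h => by rcases h with rfl | rfl | rfl <;> simp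
      refine augment hM hmax {tc, t', t''}
        {(i₂, tc.2.1, b), (i₁, a, t'.2.2), (tc.1, t'.2.1, t''.2.2), (i₅, t''.2.1, tc.2.2)} ?_
        (ball4 htcG ht'G hedge (hNLedge _ hmem))
        (injOn4 Prod.fst (Ne.symm hne12) (fun (h : i₂ = tc.1) => hi₂C (by rw [h]; exact hcC))
          (Ne.symm hi₅ne2) (fun (h : i₁ = tc.1) => hi₁C (by rw [h]; exact hcC)) (Ne.symm hi₅ne1)
          (fun (h : tc.1 = i₅) => hi₅C (by rw [← h]; exact hcC)))
        (injOn4 (fun s : Fin n × Fin n × Fin n => s.2.1) (Ne.symm (hnotLa tc htcM))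
          (hLne tc htcM t' ht'M (Ne.symm ht'tc)) (hLne tc htcM t'' ht''M (Ne.symm ht''tc))
          (hnotLa t' ht'M) (hnotLa t'' ht''M) (hLne t' ht'M t'' ht''M ht't''))
        (injOn4 (fun s : Fin n × Fin n × Fin n => s.2.2) (hnotRb t' ht'M) (hnotRb t'' ht''M)
          (hnotRb tc htcM) (hRne t' ht'M t'' ht''M ht't'') (hRne t' ht'M tc htcM ht'tc)
          hne'') ?_ ?_
      · intro s hs
        rcases mem3 hs with rfl | rfl | rfl
        exacts [htcM, ht'M, ht''M]
      · refine ball4 ?_ ?_ ?_ ?_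
        · intro t htM hnt
          exact ⟨hnotC i₂ hi₂C t htM,
            fun h => hnt (hmemT t (Or.inl (hM.2.2.1 tc htcM t htM h).symm)),
            hnotRb t htM⟩
        · intro t htM hnt
          exact ⟨hnotC i₁ hi₁C t htM, hnotLa t htM,
            fun h => hnt (hmemT t (Or.inr (Or.inl (hM.2.2.2 t' ht'M t htM h).symm)))⟩
        · intro t htM hnt
          exact ⟨fun h => hnt (hmemT t (Or.inl (hM.2.1 tc htcM t htM h).symm)),
            fun h => hnt (hmemT t (Or.inr (Or.inl (hM.2.2.1 t' ht'M t htM h).symm))),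
            fun h => hnt (hmemT t (Or.inr (Or.inr (hM.2.2.2 t'' ht''M t htM h).symm)))⟩
        · intro t htM hnt
          exact ⟨hnotC i₅ hi₅C t htM,
            fun h => hnt (hmemT t (Or.inr (Or.inr (hM.2.2.1 t'' ht''M t htM h).symm))),
            fun h => hnt (hmemT t (Or.inl (hM.2.2.2 tc htcM t htM h).symm))⟩
      · calc ({tc, t', t''} : Finset _).card ≤ 3 := card3_ub
          _ < 4 := by norm_num
          _ ≤ _ := card4_le Prod.fst (Ne.symm hne12) (fun (h : i₂ = tc.1) => hi₂C (by rw [h]; exact hcC))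
            (Ne.symm hi₅ne2) (fun (h : i₁ = tc.1) => hi₁C (by rw [h]; exact hcC)) (Ne.symm hi₅ne1)
            (fun (h : tc.1 = i₅) => hi₅C (by rw [← h]; exact hcC))
    -- counting for this colour
    set U := (M \ T₁).filter (fun t => t.2.1 ∈ NL) with hUdef
    have hNLsub : NL ⊆ U.image (fun t => t.2.1) := by
      intro x hx
      rcases Finset.mem_image.mp (hE5 x hx) with ⟨t, htM, rfl⟩
      have htT₁ : t ∉ T₁ := fun ht => hE6 t ht hx
      exact Finset.mem_image_of_mem _
        (Finset.mem_filter.mpr ⟨Finset.mem_sdiff.mpr ⟨htM, htT₁⟩, hx⟩)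
    have hNLU : NL.card ≤ U.card := le_trans (Finset.card_le_card hNLsub) Finset.card_image_le
    set SS := T₂.filter (fun t => t.2.1 ∈ NL) with hSSdef
    have hUsub : U ⊆ SS ∪ J := by
      intro t ht
      rcases Finset.mem_filter.mp ht with ⟨htMT, htNL⟩
      by_cases h : t ∈ T₂
      · exact Finset.mem_union_left _ (Finset.mem_filter.mpr ⟨h, htNL⟩)
      · exact Finset.mem_union_right _ (Finset.mem_sdiff.mpr ⟨htMT, h⟩)
    have hUcard : U.card ≤ SS.card + J.card :=
      le_trans (Finset.card_le_card hUsub) (Finset.card_union_le _ _)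
    set H := T₂.filter (fun t => t.2.2 ≠ tc.2.2 ∧ ∃ t' ∈ T₁, G tc.1 t'.2.1 t.2.2) with hHdef
    have hSH : Disjoint SS H := by
      rw [Finset.disjoint_left]
      intro t htSS htH
      rcases Finset.mem_filter.mp htSS with ⟨htT₂, htNL⟩
      rcases Finset.mem_filter.mp htH with ⟨_, hne'', t', ht', hedge⟩
      exact hE7 t htT₂ hne'' t' ht' hedge htNL
    have hSHcard : SS.card + H.card ≤ T₂.card := by
      rw [← Finset.card_union_of_disjoint hSH]
      exact Finset.card_le_card (Finset.union_subset (Finset.filter_subset _ _)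
        (Finset.filter_subset _ _))
    have hEsub : EBf (G tc.1) A₁ B₂ ⊆ A₁ ×ˢ (insert tc.2.2 (H.image (fun t => t.2.2))) := by
      intro p hp
      rcases Finset.mem_filter.mp hp with ⟨hpAB, hpG⟩
      rcases Finset.mem_product.mp hpAB with ⟨hpA, hpB⟩
      refine Finset.mem_product.mpr ⟨hpA, ?_⟩
      by_cases hyceq : p.2 = tc.2.2
      · exact Finset.mem_insert.mpr (Or.inl hyceq)
      · rcases Finset.mem_image.mp hpB with ⟨t'', ht''T₂, hp2⟩
        rcases Finset.mem_image.mp hpA with ⟨t', ht'T₁, hp1⟩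
        refine Finset.mem_insert.mpr (Or.inr (Finset.mem_image.mpr
          ⟨t'', Finset.mem_filter.mpr ⟨ht''T₂, ?_, t', ht'T₁, ?_⟩, hp2⟩))
        · rw [hp2]; exact hyceq
        · rw [hp1, hp2]; exact hpG
    have hEcard : (EBf (G tc.1) A₁ B₂).card ≤ T₁.card * (H.card + 1) := by
      calc (EBf (G tc.1) A₁ B₂).card
          ≤ (A₁ ×ˢ (insert tc.2.2 (H.image (fun t => t.2.2)))).card :=
            Finset.card_le_card hEsub
        _ = A₁.card * (insert tc.2.2 (H.image (fun t => t.2.2))).card :=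
            Finset.card_product _ _
        _ ≤ T₁.card * (H.card + 1) := by
            rw [hA₁card]
            exact Nat.mul_le_mul_left _ (le_trans (Finset.card_insert_le _ _)
              (Nat.add_le_add_right Finset.card_image_le 1))
    have hb1 : ((H.card:ℝ)) + 1 ≤ 2*μ*n + 1 := by
      have c1 : (NL.card:ℝ) ≤ (SS.card:ℝ) + J.card := by exact_mod_cast le_trans hNLU hUcard
      have c2 : (SS.card:ℝ) + H.card ≤ T₂.card := by exact_mod_cast hSHcard
      have c3 : (T₁.card:ℝ) + T₂.card + J.card = M.card := by exact_mod_cast hJM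
      linarith [hT₁cardR, hNLcard, hMlnR]
    have hfin : ((EBf (G tc.1) A₁ B₂).card : ℝ) ≤ (T₁.card:ℝ) * ((H.card:ℝ) + 1) := by
      exact_mod_cast hEcard
    have hT₁n : (T₁.card:ℝ) ≤ n := by
      have h1 : T₁.card ≤ M.card := Finset.card_le_card hT₁M
      have h2 : (T₁.card:ℝ) ≤ M.card := by exact_mod_cast h1
      linarith
    calc ((EBf (G tc.1) A₁ B₂).card : ℝ) ≤ (T₁.card:ℝ) * ((H.card:ℝ) + 1) := hfin
      _ ≤ n * (2*μ*n + 1) := by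
          apply mul_le_mul hT₁n hb1 (add_nonneg (Nat.cast_nonneg _) zero_le_one) (le_of_lt hnpos)
  -- key bound for colours used in T₁ (mirror)
  have hkeyT₁ : ∀ tc ∈ T₁, ((EBf (G tc.1) A₁ B₂).card : ℝ) ≤ n * (2*μ*n + 1) := by
    intro tc htcT₁
    obtain ⟨htcM, htcG⟩ := hT₁mem tc htcT₁
    have hcC : tc.1 ∈ C := hmemC tc htcM
    have hFF : (d*n : ℝ) < ((F \ {i₁, i₂}).card : ℝ) := by
      have h2 := Finset.card_le_card_sdiff_add_card (s := F) (t := ({i₁, i₂} : Finset (Fin n)))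
      have h3 : (({i₁, i₂} : Finset (Fin n)).card : ℝ) ≤ 2 := by exact_mod_cast card2_ub
      have h4 : (F.card:ℝ) ≤ ((F \ {i₁, i₂}).card : ℝ)
          + (({i₁, i₂} : Finset (Fin n)).card : ℝ) := by exact_mod_cast h2
      linarith
    obtain ⟨i₆, hi₆mem, hi₆deg⟩ := hpickR (F \ {i₁, i₂}) hFF tc.2.1
    rcases Finset.mem_sdiff.mp hi₆mem with ⟨hi₆F, hi₆nm⟩
    have hi₆ne1 : i₆ ≠ i₁ := fun h => hi₆nm (by simp [h])
    have hi₆ne2 : i₆ ≠ i₂ := fun h => hi₆nm (by simp [h])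
    have hi₆C : i₆ ∉ C := hFC _ hi₆F
    set NR := univ.filter (fun y => G i₆ tc.2.1 y) with hNRdef
    have hNRcard : (1/2-μ)*n ≤ (NR.card:ℝ) := by
      rw [hNRdef, ← dR_eq]
      exact hi₆deg
    have hNRedge : ∀ y ∈ NR, G i₆ tc.2.1 y := fun y hy => (Finset.mem_filter.mp hy).2
    have hE8 : ∀ y ∈ NR, y ∈ R := by
      intro y hy
      by_contra hyR
      refine augment hM hmax {tc} {(i₁, a, tc.2.2), (i₆, tc.2.1, y)} (by simp [htcM])
        (ball2 htcG (hNRedge y hy))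
        (injOn2 Prod.fst (Ne.symm hi₆ne1))
        (injOn2 (fun s : Fin n × Fin n × Fin n => s.2.1) (hnotLa tc htcM))
        (injOn2 (fun s : Fin n × Fin n × Fin n => s.2.2)
          (fun (h : tc.2.2 = y) => hyR (by rw [← h]; exact hmemR tc htcM))) ?_ ?_
      · refine ball2 ?_ ?_
        · intro t htM hnt
          exact ⟨hnotC i₁ hi₁C t htM, hnotLa t htM,
            fun h => hnt (Finset.mem_singleton.mpr (hM.2.2.2 tc htcM t htM h).symm)⟩
        · intro t htM hnt
          exact ⟨hnotC i₆ hi₆C t htM,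
            fun h => hnt (Finset.mem_singleton.mpr (hM.2.2.1 tc htcM t htM h).symm),
            fun (h : y = t.2.2) => hyR (by rw [h]; exact hmemR t htM)⟩
      · calc ({tc} : Finset _).card = 1 := Finset.card_singleton _
          _ < 2 := one_lt_two
          _ ≤ _ := card2_le Prod.fst (Ne.symm hi₆ne1)
    have hE9 : ∀ t ∈ T₂, t.2.2 ∉ NR := by
      intro t ht hmem
      obtain ⟨htM, htG⟩ := hT₂mem t ht
      have htne : t ≠ tc := fun h => hd12 tc htcT₁ (h ▸ ht)
      refine augment hM hmax {tc, t} {(i₁, a, tc.2.2), (i₂, t.2.1, b), (i₆, tc.2.1, t.2.2)} ?_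
        (ball3 htcG htG (hNRedge _ hmem))
        (injOn3 Prod.fst hne12 (Ne.symm hi₆ne1) (Ne.symm hi₆ne2))
        (injOn3 (fun s : Fin n × Fin n × Fin n => s.2.1) (hnotLa t htM) (hnotLa tc htcM)
          (hLne t htM tc htcM htne))
        (injOn3 (fun s : Fin n × Fin n × Fin n => s.2.2) (Ne.symm (hnotRb tc htcM))
          (hRne tc htcM t htM (Ne.symm htne)) (hnotRb t htM)) ?_ ?_
      · intro s hs
        rcases mem2 hs with rfl | rfl
        exacts [htcM, htM]
      · refine ball3 ?_ ?_ ?_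
        · intro t' ht'M hnt
          refine ⟨hnotC i₁ hi₁C t' ht'M, hnotLa t' ht'M, fun h => hnt ?_⟩
          exact Finset.mem_insert.mpr (Or.inl (hM.2.2.2 tc htcM t' ht'M h).symm)
        · intro t' ht'M hnt
          refine ⟨hnotC i₂ hi₂C t' ht'M, fun h => hnt ?_, hnotRb t' ht'M⟩
          exact Finset.mem_insert.mpr (Or.inr (Finset.mem_singleton.mpr
            (hM.2.2.1 t htM t' ht'M h).symm))
        · intro t' ht'M hnt
          refine ⟨hnotC i₆ hi₆C t' ht'M, fun h => hnt ?_, fun h => hnt ?_⟩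
          · exact Finset.mem_insert.mpr (Or.inl (hM.2.2.1 tc htcM t' ht'M h).symm)
          · exact Finset.mem_insert.mpr (Or.inr (Finset.mem_singleton.mpr
              (hM.2.2.2 t htM t' ht'M h).symm))
      · calc ({tc, t} : Finset _).card ≤ 2 := card2_ub
          _ < 3 := by norm_num
          _ ≤ _ := card3_le Prod.fst hne12 (Ne.symm hi₆ne1) (Ne.symm hi₆ne2)
    have hE10 : ∀ t' ∈ T₁, t'.2.1 ≠ tc.2.1 → ∀ t'' ∈ T₂, G tc.1 t'.2.1 t''.2.2 →
        t'.2.2 ∉ NR := by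
      intro t' ht' hLdiff t'' ht'' hedge hmem
      obtain ⟨ht'M, ht'G⟩ := hT₁mem t' ht'
      obtain ⟨ht''M, ht''G⟩ := hT₂mem t'' ht''
      have ht'tc : t' ≠ tc := fun h => hLdiff (by rw [h])
      have ht''tc : t'' ≠ tc := fun h => hd12 tc htcT₁ (h ▸ ht'')
      have ht't'' : t' ≠ t'' := fun h => hd12 t' ht' (h ▸ ht'')
      have hmemT : ∀ t, t = tc ∨ t = t' ∨ t = t'' → t ∈ ({tc, t', t''} : Finset _) :=
        fun t h => by rcases h with rfl | rfl | rfl <;> simp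
      refine augment hM hmax {tc, t', t''}
        {(i₁, a, tc.2.2), (i₂, t''.2.1, b), (tc.1, t'.2.1, t''.2.2), (i₆, tc.2.1, t'.2.2)} ?_
        (ball4 htcG ht''G hedge (hNRedge _ hmem))
        (injOn4 Prod.fst hne12 (fun (h : i₁ = tc.1) => hi₁C (by rw [h]; exact hcC)) (Ne.symm hi₆ne1)
          (fun (h : i₂ = tc.1) => hi₂C (by rw [h]; exact hcC)) (Ne.symm hi₆ne2)
          (fun (h : tc.1 = i₆) => hi₆C (by rw [← h]; exact hcC)))
        (injOn4 (fun s : Fin n × Fin n × Fin n => s.2.1) (hnotLa t'' ht''M) (hnotLa t' ht'M)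
          (hnotLa tc htcM) (hLne t'' ht''M t' ht'M (Ne.symm ht't''))
          (hLne t'' ht''M tc htcM ht''tc) hLdiff)
        (injOn4 (fun s : Fin n × Fin n × Fin n => s.2.2) (Ne.symm (hnotRb tc htcM))
          (hRne tc htcM t'' ht''M (Ne.symm ht''tc)) (hRne tc htcM t' ht'M (Ne.symm ht'tc))
          (hnotRb t'' ht''M) (hnotRb t' ht'M) (hRne t'' ht''M t' ht'M (Ne.symm ht't''))) ?_ ?_
      · intro s hs
        rcases mem3 hs with rfl | rfl | rfl
        exacts [htcM, ht'M, ht''M]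
      · refine ball4 ?_ ?_ ?_ ?_
        · intro t htM hnt
          exact ⟨hnotC i₁ hi₁C t htM, hnotLa t htM,
            fun h => hnt (hmemT t (Or.inl (hM.2.2.2 tc htcM t htM h).symm))⟩
        · intro t htM hnt
          exact ⟨hnotC i₂ hi₂C t htM,
            fun h => hnt (hmemT t (Or.inr (Or.inr (hM.2.2.1 t'' ht''M t htM h).symm))),
            hnotRb t htM⟩
        · intro t htM hnt
          exact ⟨fun h => hnt (hmemT t (Or.inl (hM.2.1 tc htcM t htM h).symm)),
            fun h => hnt (hmemT t (Or.inr (Or.inl (hM.2.2.1 t' ht'M t htM h).symm))),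
            fun h => hnt (hmemT t (Or.inr (Or.inr (hM.2.2.2 t'' ht''M t htM h).symm)))⟩
        · intro t htM hnt
          exact ⟨hnotC i₆ hi₆C t htM,
            fun h => hnt (hmemT t (Or.inl (hM.2.2.1 tc htcM t htM h).symm)),
            fun h => hnt (hmemT t (Or.inr (Or.inl (hM.2.2.2 t' ht'M t htM h).symm)))⟩
      · calc ({tc, t', t''} : Finset _).card ≤ 3 := card3_ub
          _ < 4 := by norm_num
          _ ≤ _ := card4_le Prod.fst hne12 (fun (h : i₁ = tc.1) => hi₁C (by rw [h]; exact hcC))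
            (Ne.symm hi₆ne1) (fun (h : i₂ = tc.1) => hi₂C (by rw [h]; exact hcC)) (Ne.symm hi₆ne2)
            (fun (h : tc.1 = i₆) => hi₆C (by rw [← h]; exact hcC))
    -- counting for this colour
    set U := (M \ T₂).filter (fun t => t.2.2 ∈ NR) with hUdef
    have hNRsub : NR ⊆ U.image (fun t => t.2.2) := by
      intro y hy
      rcases Finset.mem_image.mp (hE8 y hy) with ⟨t, htM, rfl⟩
      have htT₂ : t ∉ T₂ := fun ht => hE9 t ht hy
      exact Finset.mem_image_of_mem _
        (Finset.mem_filter.mpr ⟨Finset.mem_sdiff.mpr ⟨htM, htT₂⟩, hy⟩)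
    have hNRU : NR.card ≤ U.card := le_trans (Finset.card_le_card hNRsub) Finset.card_image_le
    set SS := T₁.filter (fun t => t.2.2 ∈ NR) with hSSdef
    set J' := (M \ T₂) \ T₁ with hJ'def
    have hsub2' : T₁ ⊆ M \ T₂ := fun t ht => Finset.mem_sdiff.mpr ⟨hT₁M ht, hd12 t ht⟩
    have hJM' : T₂.card + T₁.card + J'.card = M.card := by
      have h1 : (M \ T₂).card = M.card - T₂.card := Finset.card_sdiff_of_subset hT₂M
      have h3 : J'.card = (M \ T₂).card - T₁.card := Finset.card_sdiff_of_subset hsub2'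
      have h4 := Finset.card_le_card hT₂M
      have h5 := Finset.card_le_card hsub2'
      omega
    have hUsub : U ⊆ SS ∪ J' := by
      intro t ht
      rcases Finset.mem_filter.mp ht with ⟨htMT, htNR⟩
      by_cases h : t ∈ T₁
      · exact Finset.mem_union_left _ (Finset.mem_filter.mpr ⟨h, htNR⟩)
      · exact Finset.mem_union_right _ (Finset.mem_sdiff.mpr ⟨htMT, h⟩)
    have hUcard : U.card ≤ SS.card + J'.card :=
      le_trans (Finset.card_le_card hUsub) (Finset.card_union_le _ _)
    set H := T₁.filter (fun t => t.2.1 ≠ tc.2.1 ∧ ∃ t'' ∈ T₂, G tc.1 t.2.1 t''.2.2) with hHdef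
    have hSH : Disjoint SS H := by
      rw [Finset.disjoint_left]
      intro t htSS htH
      rcases Finset.mem_filter.mp htSS with ⟨htT₁, htNR⟩
      rcases Finset.mem_filter.mp htH with ⟨_, hLdiff, t'', ht'', hedge⟩
      exact hE10 t htT₁ hLdiff t'' ht'' hedge htNR
    have hSHcard : SS.card + H.card ≤ T₁.card := by
      rw [← Finset.card_union_of_disjoint hSH]
      exact Finset.card_le_card (Finset.union_subset (Finset.filter_subset _ _)
        (Finset.filter_subset _ _))
    have hEsub : EBf (G tc.1) A₁ B₂ ⊆ (insert tc.2.1 (H.image (fun t => t.2.1))) ×ˢ B₂ := by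
      intro p hp
      rcases Finset.mem_filter.mp hp with ⟨hpAB, hpG⟩
      rcases Finset.mem_product.mp hpAB with ⟨hpA, hpB⟩
      refine Finset.mem_product.mpr ⟨?_, hpB⟩
      by_cases hxceq : p.1 = tc.2.1
      · exact Finset.mem_insert.mpr (Or.inl hxceq)
      · rcases Finset.mem_image.mp hpA with ⟨t', ht'T₁, hp1⟩
        rcases Finset.mem_image.mp hpB with ⟨t'', ht''T₂, hp2⟩
        refine Finset.mem_insert.mpr (Or.inr (Finset.mem_image.mpr
          ⟨t', Finset.mem_filter.mpr ⟨ht'T₁, ?_, t'', ht''T₂, ?_⟩, hp1⟩))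
        · rw [hp1]; exact hxceq
        · rw [hp1, hp2]; exact hpG
    have hEcard : (EBf (G tc.1) A₁ B₂).card ≤ (H.card + 1) * T₂.card := by
      calc (EBf (G tc.1) A₁ B₂).card
          ≤ ((insert tc.2.1 (H.image (fun t => t.2.1))) ×ˢ B₂).card :=
            Finset.card_le_card hEsub
        _ = (insert tc.2.1 (H.image (fun t => t.2.1))).card * B₂.card :=
            Finset.card_product _ _
        _ ≤ (H.card + 1) * T₂.card := by
            rw [hB₂card]
            exact Nat.mul_le_mul_right _ (le_trans (Finset.card_insert_le _ _)
              (Nat.add_le_add_right Finset.card_image_le 1))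
    have hb1 : ((H.card:ℝ)) + 1 ≤ 2*μ*n + 1 := by
      have c1 : (NR.card:ℝ) ≤ (SS.card:ℝ) + J'.card := by exact_mod_cast le_trans hNRU hUcard
      have c2 : (SS.card:ℝ) + H.card ≤ T₁.card := by exact_mod_cast hSHcard
      have c3 : (T₂.card:ℝ) + T₁.card + J'.card = M.card := by exact_mod_cast hJM'
      linarith [hT₂cardR, hNRcard, hMlnR]
    have hfin : ((EBf (G tc.1) A₁ B₂).card : ℝ) ≤ ((H.card:ℝ) + 1) * (T₂.card:ℝ) := by
      exact_mod_cast hEcard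
    have hT₂n : (T₂.card:ℝ) ≤ n := by
      have h1 : T₂.card ≤ M.card := Finset.card_le_card hT₂M
      have h2 : (T₂.card:ℝ) ≤ M.card := by exact_mod_cast h1
      linarith
    calc ((EBf (G tc.1) A₁ B₂).card : ℝ) ≤ ((H.card:ℝ) + 1) * (T₂.card:ℝ) := hfin
      _ ≤ (2*μ*n + 1) * n := by
          apply mul_le_mul hb1 hT₂n (Nat.cast_nonneg _) (by linarith only [hμn])
      _ = n * (2*μ*n + 1) := mul_comm _ _
  -- summing the per-colour bounds
  have hfble : ∀ cc : Fin n, ((EBf (G cc) A₁ B₂).card : ℝ) ≤ (T₁.card:ℝ) * T₂.card := by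
    intro cc
    have h1 := EBf_card_le (G cc) A₁ B₂
    rw [hA₁card, hB₂card] at h1
    exact_mod_cast h1
  have hsubF : ({i₁, i₂} : Finset (Fin n)) ⊆ F := by
    intro i hi
    rcases mem2 hi with rfl | rfl
    exacts [hi₁F, hi₂F]
  have hzeroSum : ∑ c ∈ F \ {i₁, i₂}, ((EBf (G c) A₁ B₂).card : ℝ) = 0 := by
    apply Finset.sum_eq_zero
    intro c hc
    rcases Finset.mem_sdiff.mp hc with ⟨hcF, hc12⟩
    have h1 : c ≠ i₁ := fun h => hc12 (by simp [h])
    have h2 : c ≠ i₂ := fun h => hc12 (by simp [h])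
    rw [hzero c hcF h1 h2]
    simp
  have hsumF : ∑ c ∈ F, ((EBf (G c) A₁ B₂).card : ℝ) ≤ 2 * ((T₁.card:ℝ) * T₂.card) := by
    rw [← Finset.sum_sdiff hsubF, hzeroSum, Finset.sum_pair hne12]
    have := hfble i₁
    have := hfble i₂
    linarith
  have hsumC : ∑ c ∈ C, ((EBf (G c) A₁ B₂).card : ℝ)
      = ∑ t ∈ M, ((EBf (G t.1) A₁ B₂).card : ℝ) := by
    rw [hCdef]
    exact Finset.sum_image fun s hs t ht h => hM.2.1 s hs t ht h
  have hsumM : ∑ t ∈ M, ((EBf (G t.1) A₁ B₂).card : ℝ)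
      = (∑ t ∈ J, ((EBf (G t.1) A₁ B₂).card : ℝ)
        + ∑ t ∈ T₂, ((EBf (G t.1) A₁ B₂).card : ℝ))
        + ∑ t ∈ T₁, ((EBf (G t.1) A₁ B₂).card : ℝ) := by
    rw [hJdef, Finset.sum_sdiff hsub2, Finset.sum_sdiff hT₁M]
  have hsumT₁b : ∑ t ∈ T₁, ((EBf (G t.1) A₁ B₂).card : ℝ)
      ≤ (T₁.card:ℝ) * (n * (2*μ*n + 1)) := by
    have h := Finset.sum_le_card_nsmul T₁ (fun t => ((EBf (G t.1) A₁ B₂).card : ℝ))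
      (n * (2*μ*n + 1)) (fun t ht => hkeyT₁ t ht)
    simpa [nsmul_eq_mul] using h
  have hsumT₂b : ∑ t ∈ T₂, ((EBf (G t.1) A₁ B₂).card : ℝ)
      ≤ (T₂.card:ℝ) * (n * (2*μ*n + 1)) := by
    have h := Finset.sum_le_card_nsmul T₂ (fun t => ((EBf (G t.1) A₁ B₂).card : ℝ))
      (n * (2*μ*n + 1)) (fun t ht => hkeyT₂ t ht)
    simpa [nsmul_eq_mul] using h
  have hsumJb : ∑ t ∈ J, ((EBf (G t.1) A₁ B₂).card : ℝ)
      ≤ (J.card:ℝ) * ((T₁.card:ℝ) * T₂.card) := by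
    have h := Finset.sum_le_card_nsmul J (fun t => ((EBf (G t.1) A₁ B₂).card : ℝ))
      ((T₁.card:ℝ) * T₂.card) (fun t _ => hfble t.1)
    simpa [nsmul_eq_mul] using h
  have htotal : ∑ c : Fin n, ((EBf (G c) A₁ B₂).card : ℝ)
      = ∑ c ∈ F, ((EBf (G c) A₁ B₂).card : ℝ) + ∑ c ∈ C, ((EBf (G c) A₁ B₂).card : ℝ) := by
    rw [hFdef]
    exact (Finset.sum_sdiff (Finset.subset_univ C)).symm
  -- padding to exactly n/2 and the niceness lower bound
  have hA₁cR : (1/2-μ)*n ≤ (A₁.card:ℝ) := by rw [hA₁card]; exact hT₁cardR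
  have hB₂cR : (1/2-μ)*n ≤ (B₂.card:ℝ) := by rw [hB₂card]; exact hT₂cardR
  have hhalf : ((n/2 : ℕ) : ℝ) ≤ (n:ℝ)/2 := Nat.cast_div_le
  have hμn0 : (0:ℝ) ≤ μ * n := by positivity
  obtain ⟨A, hAcard, hAd⟩ : ∃ A : Finset (Fin n), A.card = n/2 ∧ ((A \ A₁).card : ℝ) ≤ μ*n := by
    rcases le_or_gt A₁.card (n/2) with hle | hgt
    · obtain ⟨A, hA1, _, hAc⟩ := Finset.exists_subsuperset_card_eq (Finset.subset_univ A₁) hle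
        (by rw [Finset.card_univ, Fintype.card_fin]; exact Nat.div_le_self n 2)
      refine ⟨A, hAc, ?_⟩
      rw [Finset.card_sdiff_of_subset hA1, hAc, Nat.cast_sub hle]
      linarith
    · obtain ⟨A, hA1, hAc⟩ := Finset.exists_subset_card_eq hgt.le
      refine ⟨A, hAc, ?_⟩
      rw [Finset.sdiff_eq_empty_iff_subset.mpr hA1]
      simpa using hμn0
  obtain ⟨B, hBcard, hBd⟩ : ∃ B : Finset (Fin n), B.card = n/2 ∧ ((B \ B₂).card : ℝ) ≤ μ*n := by
    rcases le_or_gt B₂.card (n/2) with hle | hgt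
    · obtain ⟨B, hB1, _, hBc⟩ := Finset.exists_subsuperset_card_eq (Finset.subset_univ B₂) hle
        (by rw [Finset.card_univ, Fintype.card_fin]; exact Nat.div_le_self n 2)
      refine ⟨B, hBc, ?_⟩
      rw [Finset.card_sdiff_of_subset hB1, hBc, Nat.cast_sub hle]
      linarith
    · obtain ⟨B, hB1, hBc⟩ := Finset.exists_subset_card_eq hgt.le
      refine ⟨B, hBc, ?_⟩
      rw [Finset.sdiff_eq_empty_iff_subset.mpr hB1]
      simpa using hμn0
  have hup : ∀ c : Fin n, (eBip (G c) A B : ℝ)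
      ≤ ((EBf (G c) A₁ B₂).card : ℝ) + 2*μ*n^2 := by
    intro c
    have h1 := EBf_le_split (G c) A B A₁ B₂
    have h1R : ((EBf (G c) A B).card : ℝ) ≤ ((EBf (G c) A₁ B₂).card : ℝ)
        + ((A \ A₁).card : ℝ) * B.card + (A.card : ℝ) * ((B \ B₂).card : ℝ) := by
      exact_mod_cast h1
    have h2 : ((A \ A₁).card : ℝ) * B.card ≤ μ*n*n :=
      mul_le_mul hAd (hcard_leR B) (by positivity) hμn0
    have h3 : (A.card : ℝ) * ((B \ B₂).card : ℝ) ≤ n*(μ*n) :=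
      mul_le_mul (hcard_leR A) hBd (by positivity) (le_of_lt hnpos)
    have h4 : μ*n*n + n*(μ*n) = 2*μ*n^2 := by ring
    rw [eBip_eq]
    linarith
  have hlow : 6*μ*(n:ℝ)^3 ≤ (∑ c : Fin n, ((EBf (G c) A₁ B₂).card : ℝ)) + 2*μ*n^3 := by
    have hs : ∑ c : Fin n, (eBip (G c) A B : ℝ)
        ≤ (∑ c : Fin n, ((EBf (G c) A₁ B₂).card : ℝ)) + 2*μ*n^3 := by
      calc ∑ c : Fin n, (eBip (G c) A B : ℝ)
          ≤ ∑ c : Fin n, (((EBf (G c) A₁ B₂).card : ℝ) + 2*μ*n^2) :=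
            Finset.sum_le_sum fun c _ => hup c
        _ = (∑ c : Fin n, ((EBf (G c) A₁ B₂).card : ℝ)) + n * (2*μ*n^2) := by
            rw [Finset.sum_add_distrib, Finset.sum_const, Finset.card_univ,
              Fintype.card_fin, nsmul_eq_mul]
        _ = (∑ c : Fin n, ((EBf (G c) A₁ B₂).card : ℝ)) + 2*μ*n^3 := by ring
    exact le_trans (hnice A B hAcard hBcard) hs
  -- final contradiction
  have hsum12R : (T₁.card:ℝ) + T₂.card ≤ n := by
    have hc : (T₁.card:ℝ) + T₂.card + J.card = M.card := by exact_mod_cast hJM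
    have hJ0 : (0:ℝ) ≤ (J.card:ℝ) := Nat.cast_nonneg _
    linarith
  have hJleR : (J.card:ℝ) ≤ 2*μ*n := by
    have hc : (T₁.card:ℝ) + T₂.card + J.card = M.card := by exact_mod_cast hJM
    linarith [hT₁cardR, hT₂cardR]
  have ht12 : (T₁.card:ℝ) * T₂.card ≤ n^2/4 := by
    have h1 : (0:ℝ) ≤ (T₁.card:ℝ) := Nat.cast_nonneg _
    have h2 : (0:ℝ) ≤ (T₂.card:ℝ) := Nat.cast_nonneg _
    have h3 : ((T₁.card:ℝ) + T₂.card) * ((T₁.card:ℝ) + T₂.card) ≤ n * n :=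
      mul_le_mul hsum12R hsum12R (by linarith) (le_of_lt hnpos)
    have h4 : (0:ℝ) ≤ ((T₁.card:ℝ) - T₂.card)^2 := sq_nonneg _
    have h5 : ((T₁.card:ℝ) + T₂.card) * ((T₁.card:ℝ) + T₂.card)
        - ((T₁.card:ℝ) - T₂.card)^2 = 4*((T₁.card:ℝ) * T₂.card) := by ring
    have h6 : (n:ℝ)*n = n^2 := by ring
    linarith only [h3, h4, h5, h6]
  have hKpos : (0:ℝ) ≤ n * (2*μ*n + 1) := by positivity
  have hT12K : (T₁.card:ℝ) * (n * (2*μ*n + 1)) + (T₂.card:ℝ) * (n * (2*μ*n + 1))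
      ≤ 2*μ*n^3 + n^2 := by
    have h1 := mul_le_mul_of_nonneg_right hsum12R hKpos
    have h2 : ((T₁.card:ℝ) + T₂.card) * (n * (2*μ*n + 1))
        = (T₁.card:ℝ) * (n * (2*μ*n + 1)) + (T₂.card:ℝ) * (n * (2*μ*n + 1)) := by ring
    have h3 : (n:ℝ) * (n * (2*μ*n + 1)) = 2*μ*n^3 + n^2 := by ring
    linarith
  have hJprod : (J.card:ℝ) * ((T₁.card:ℝ) * T₂.card) ≤ μ*n^3/2 := by
    have h1 : (J.card:ℝ) * ((T₁.card:ℝ) * T₂.card) ≤ (2*μ*n) * (n^2/4) :=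
      mul_le_mul hJleR ht12 (by positivity) (by positivity)
    have h2 : (2*μ*(n:ℝ)) * (n^2/4) = μ*n^3/2 := by ring
    linarith
  have hFtot : ∑ c ∈ F, ((EBf (G c) A₁ B₂).card : ℝ) ≤ n^2/2 := by
    have h1 : 2 * ((T₁.card:ℝ) * T₂.card) ≤ n^2/2 := by linarith
    linarith
  have htotub : ∑ c : Fin n, ((EBf (G c) A₁ B₂).card : ℝ)
      ≤ n^2/2 + (μ*n^3/2 + (T₂.card:ℝ) * (n * (2*μ*n + 1)))
        + (T₁.card:ℝ) * (n * (2*μ*n + 1)) := by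
    rw [htotal, hsumC, hsumM]
    linarith [hsumT₁b, hsumT₂b, hsumJb, hJprod, hFtot]
  have hμn3 : 4*(n:ℝ)^2 ≤ μ*n^3 := by
    have h1 : (0:ℝ) ≤ (n:ℝ)*(n:ℝ)*(μ*n - 4) :=
      mul_nonneg (mul_nonneg (le_of_lt hnpos) (le_of_lt hnpos)) (by linarith only [hμn])
    have h2 : (n:ℝ)*(n:ℝ)*(μ*n - 4) = μ*n^3 - 4*n^2 := by ring
    linarith only [h1, h2]
  have hn2pos : (0:ℝ) < n^2 := by positivity
  linarith only [hlow, htotub, hT12K, hμn3, hn2pos]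
end

section
/- Suppose 0 < 1/n ≪ μ' ≪ α ≪ γ, ε ≪ δ ≪ 1. Let 𝒢 = {G_1, …, G_n} be a collection of bipartite graphs on a common vertex partition V = V_1 ∪ V_2 with |V_1| = |V_2| = n. If 𝒢 is (γ, α, ε, δ)-stable, then 𝒢 is μ'-nice, i.e., for every A ⊆ V_1 and B ⊆ V_2 with |A| = |B| = ⌊n/2⌋, Σ_{i∈[n]} e_{G_i}(A,B) ≥ μ'n³. -/
open Finset
open scoped Classical symmDiff

noncomputable def dRin {n : ℕ} (G : Fin n → Fin n → Prop) (v : Fin n)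
    (S : Finset (Fin n)) : ℕ :=
  Nat.card {w : Fin n // w ∈ S ∧ G v w}

noncomputable def dLin {n : ℕ} (G : Fin n → Fin n → Prop) (w : Fin n)
    (S : Finset (Fin n)) : ℕ :=
  Nat.card {v : Fin n // v ∈ S ∧ G v w}

/-- A balanced bipartite graph `G` is `μ`-nice if `e_G(A,B) ≥ μn²` whenever `A ⊆ V₁`,
`B ⊆ V₂` have size at least `(1/2 − μ)n`. -/
def isNice {n : ℕ} (μ : ℝ) (G : Fin n → Fin n → Prop) : Prop :=
  ∀ A B : Finset (Fin n), (1/2 - μ) * (n : ℝ) ≤ A.card → (1/2 - μ) * (n : ℝ) ≤ B.card →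
    μ * (n : ℝ) ^ 2 ≤ (eBip G A B : ℝ)

/-- `G` is `ε`-extremal if it is not `ε⁵`-nice. -/
def isExtremal {n : ℕ} (ε : ℝ) (G : Fin n → Fin n → Prop) : Prop :=
  ¬ isNice (ε ^ 5) G

/-- `(A1, B1, C1, A2, B2, C2)` is a characteristic partition of the `ε`-extremal
balanced bipartite graph `G`. -/
def isCharPart {n : ℕ} (ε : ℝ) (G : Fin n → Fin n → Prop)
    (A1 B1 C1 A2 B2 C2 : Finset (Fin n)) : Prop :=
  (A1 ∪ B1 ∪ C1 = univ ∧ A1.card + B1.card + C1.card = n) ∧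
  (A2 ∪ B2 ∪ C2 = univ ∧ A2.card + B2.card + C2.card = n) ∧
  (A1.card : ℝ) = (1/2 - ε) * n ∧ (B1.card : ℝ) = (1/2 - ε) * n ∧
  (C1.card : ℝ) = 2 * ε * n ∧
  (A2.card : ℝ) = (1/2 - ε) * n ∧ (B2.card : ℝ) = (1/2 - ε) * n ∧
  (C2.card : ℝ) = 2 * ε * n ∧
  (∀ v ∈ A2, (1/2 - 2*ε) * (n : ℝ) ≤ dLin G v A1) ∧
  (∀ v ∈ B2, (1/2 - 2*ε) * (n : ℝ) ≤ dLin G v B1) ∧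
  (∀ v ∈ A1, (1/2 - 2*ε) * (n : ℝ) ≤ dRin G v A2) ∧
  (∀ v ∈ B1, (1/2 - 2*ε) * (n : ℝ) ≤ dRin G v B2) ∧
  ((eBip G A1 B2 : ℝ) ≤ ε * (n : ℝ) ^ 2 ∨ (eBip G B1 A2 : ℝ) ≤ ε * (n : ℝ) ^ 2)


/-!
If `γn` of the graphs are `α`-nice, each of them alone has `αn²` edges between `A` and `B`.
Otherwise at least `2δn²` ordered pairs are crossing. In a characteristic partition every
vertex of `A₁` misses at most `εn` vertices of `A₂`, and every vertex of `B₁` at most `εn`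
vertices of `B₂`. So if `e(A, B) < νn²`, then `A` cannot meet `A₁` substantially while `B`
meets `A₂`, nor meet `B₁` while `B` meets `B₂`; as `|A| = |B| = ⌊n/2⌋`, this forces `A` to be
`12νn`-close to `A₁` or to `B₁`. Since `A₁` is `B₁ᶜ` up to the small set `C₁`, two graphs
`G_i`, `G_j` with `e(A, B) < νn²` would have `A₁^i` close to `A₁^j` or to `B₁^j`, which
crossing forbids. Hence `e_i(A, B) + e_j(A, B) ≥ νn²` on every crossing pair, and double
counting gives `∑ᵢ eᵢ(A, B) ≥ δνn³`.
-/

section Finsets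

variable {α : Type*} [DecidableEq α]

lemma card_symmDiff_add_two_mul_card_inter (s t : Finset α) :
    #(s ∆ t) + 2 * #(s ∩ t) = #s + #t := by
  have hst := card_sdiff_add_card_inter s t
  have hts := card_sdiff_add_card_inter t s
  rw [inter_comm] at hts
  rw [symmDiff_def, sup_eq_union, card_union_of_disjoint disjoint_sdiff_sdiff]
  omega

lemma card_symmDiff_le_add (s t u : Finset α) : #(s ∆ u) ≤ #(s ∆ t) + #(t ∆ u) :=
  (card_le_card (symmDiff_triangle s t u)).trans (card_union_le _ _)

lemma card_le_card_inter_add_card_inter_add_card [Fintype α] {s X Y C : Finset α}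
    (hcover : X ∪ Y ∪ C = univ) : #s ≤ #(s ∩ X) + #(s ∩ Y) + #C := by
  have hsub : s ⊆ (s ∩ X) ∪ (s ∩ Y) ∪ C := by
    intro x hx
    have : x ∈ X ∪ Y ∪ C := hcover ▸ mem_univ x
    simp only [mem_union, mem_inter] at this ⊢
    tauto
  calc #s ≤ #((s ∩ X) ∪ (s ∩ Y) ∪ C) := card_le_card hsub
    _ ≤ #((s ∩ X) ∪ (s ∩ Y)) + #C := card_union_le _ _
    _ ≤ #(s ∩ X) + #(s ∩ Y) + #C := by grw [card_union_le]

lemma disjoint_of_union_eq_univ_of_card_eq [Fintype α] {X Y C : Finset α}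
    (hcover : X ∪ Y ∪ C = univ) (hcard : #X + #Y + #C = Fintype.card α) : Disjoint X Y := by
  have h₁ := card_union_le (X ∪ Y) C
  have h₂ := card_union_le X Y
  rw [hcover, card_univ] at h₁
  rw [← card_union_eq_card_add_card]
  omega

lemma symmDiff_compl_subset [Fintype α] {X Y C : Finset α} (hXY : Disjoint X Y)
    (hcover : X ∪ Y ∪ C = univ) : X ∆ Yᶜ ⊆ C := by
  intro x hx
  have : x ∈ X ∪ Y ∪ C := hcover ▸ mem_univ x
  simp only [mem_symmDiff, mem_compl, not_not, mem_union] at hx this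
  rcases hx with ⟨hX, hY⟩ | ⟨hY, hX⟩
  · exact absurd hY (disjoint_left.mp hXY hX)
  · tauto

end Finsets

lemma half_sub_half_le_cast_div_two (n : ℕ) : (n : ℝ) / 2 - 1 / 2 ≤ ((n / 2 : ℕ) : ℝ) := by
  have : n ≤ 2 * (n / 2) + 1 := by omega
  have : (n : ℝ) ≤ 2 * ((n / 2 : ℕ) : ℝ) + 1 := by exact_mod_cast this
  linarith

lemma card_mul_le_sum_of_le {ι : Type*} [Fintype ι] {P : ι → Prop} {f : ι → ℝ} {c : ℝ}
    (hf : ∀ i, 0 ≤ f i) (hP : ∀ i, P i → c ≤ f i) :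
    #(univ.filter P) * c ≤ ∑ i, f i := by
  calc #(univ.filter P) * c = #(univ.filter P) • c := (nsmul_eq_mul _ _).symm
    _ ≤ ∑ i ∈ univ.filter P, f i := card_nsmul_le_sum _ _ _ fun i hi => hP i (mem_filter.mp hi).2
    _ ≤ ∑ i, f i := sum_le_sum_of_subset_of_nonneg (subset_univ _) fun i _ _ => hf i

lemma natCard_mul_le_two_mul_card_mul_sum {ι : Type*} [Fintype ι] {P : ι × ι → Prop}
    {f : ι → ℝ} {c : ℝ} (hf : ∀ i, 0 ≤ f i) (hP : ∀ p, P p → c ≤ f p.1 + f p.2) :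
    Nat.card {p // P p} * c ≤ 2 * Fintype.card ι * ∑ i, f i := by
  rw [Nat.card_eq_fintype_card, Fintype.card_subtype]
  calc _ ≤ ∑ p : ι × ι, (f p.1 + f p.2) :=
        card_mul_le_sum_of_le (fun p => add_nonneg (hf _) (hf _)) hP
    _ = 2 * Fintype.card ι * ∑ i, f i := by
        rw [Fintype.sum_prod_type]
        simp only [sum_add_distrib, sum_const, card_univ, nsmul_eq_mul, ← mul_sum]
        ring

section Degrees

variable {n : ℕ} (G : Fin n → Fin n → Prop)

lemma dRin_eq_card_filter (v : Fin n) (S : Finset (Fin n)) :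
    dRin G v S = #(S.filter (G v)) := by
  rw [dRin, Nat.card_eq_fintype_card, Fintype.card_subtype]
  congr 1
  ext w
  simp

lemma eBip_eq_sum_dRin (A B : Finset (Fin n)) : eBip G A B = ∑ v ∈ A, dRin G v B := by
  rw [eBip, Nat.card_eq_fintype_card, Fintype.card_subtype, card_filter]
  simp only [dRin_eq_card_filter, card_filter, Fintype.sum_prod_type, ite_and]
  simp [sum_ite_mem]

lemma card_inter_add_dRin_le (v : Fin n) (B Y : Finset (Fin n)) :
    #(B ∩ Y) + dRin G v Y ≤ dRin G v B + #Y := by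
  rw [dRin_eq_card_filter, dRin_eq_card_filter]
  have hsplit := card_filter_add_card_filter_not (s := Y) (G v)
  have hsub : B ∩ Y ⊆ B.filter (G v) ∪ Y.filter (¬ G v ·) := by
    intro w hw
    rw [mem_inter] at hw
    by_cases h : G v w <;> simp [hw, h]
  have := (card_le_card hsub).trans (card_union_le _ _)
  omega

lemma card_inter_mul_le_eBip {X Y : Finset (Fin n)} {d : ℝ}
    (hdeg : ∀ v ∈ X, (#Y : ℝ) - d ≤ dRin G v Y) (A B : Finset (Fin n)) :
    (#(A ∩ X) : ℝ) * (#(B ∩ Y) - d) ≤ eBip G A B := by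
  rw [eBip_eq_sum_dRin, Nat.cast_sum]
  calc (#(A ∩ X) : ℝ) * (#(B ∩ Y) - d) = ∑ _v ∈ A ∩ X, ((#(B ∩ Y) : ℝ) - d) := by
        rw [sum_const, nsmul_eq_mul]
    _ ≤ ∑ v ∈ A ∩ X, (dRin G v B : ℝ) := by
        refine sum_le_sum fun v hv => ?_
        have := card_inter_add_dRin_le G v B Y
        have : ((#(B ∩ Y) + dRin G v Y : ℕ) : ℝ) ≤ ((dRin G v B + #Y : ℕ) : ℝ) := by
          exact_mod_cast this
        push_cast at this
        linarith [hdeg v (mem_inter.mp hv).2]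
    _ ≤ ∑ v ∈ A, (dRin G v B : ℝ) :=
        sum_le_sum_of_subset_of_nonneg inter_subset_left fun _ _ _ => Nat.cast_nonneg _

end Degrees

lemma half_sub_le_of_mul_sub_le {ν N a₁ b₁ a₂ b₂ E : ℝ} (hν₀ : 0 ≤ ν) (hν : ν ≤ 1 / 100)
    (hN : 0 < N) (ha : N / 2 - 3 * ν * N ≤ a₁ + b₁) (hb : N / 2 - 3 * ν * N ≤ a₂ + b₂)
    (hE₁ : a₁ * (a₂ - ν * N) ≤ E) (hE₂ : b₁ * (b₂ - ν * N) ≤ E) (hb₁ : 0 ≤ b₁)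
    (hE : E < ν * N ^ 2) (ha₁ : N / 5 ≤ a₁) :
    N / 2 - 6 * ν * N ≤ a₁ := by
  have ha₂ : a₂ ≤ 6 * ν * N := by
    by_contra! h
    have : N / 5 * (a₂ - ν * N) ≤ a₁ * (a₂ - ν * N) := by gcongr; nlinarith
    nlinarith
  have : b₁ * (N / 3) ≤ b₁ * (b₂ - ν * N) := by gcongr; nlinarith
  nlinarith

lemma half_sub_le_or_half_sub_le {ν N a₁ b₁ a₂ b₂ E : ℝ} (hν₀ : 0 ≤ ν) (hν : ν ≤ 1 / 100)
    (hN : 0 < N) (ha : N / 2 - 3 * ν * N ≤ a₁ + b₁) (hb : N / 2 - 3 * ν * N ≤ a₂ + b₂)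
    (hE₁ : a₁ * (a₂ - ν * N) ≤ E) (hE₂ : b₁ * (b₂ - ν * N) ≤ E)
    (ha₁ : 0 ≤ a₁) (hb₁ : 0 ≤ b₁) (hE : E < ν * N ^ 2) :
    N / 2 - 6 * ν * N ≤ a₁ ∨ N / 2 - 6 * ν * N ≤ b₁ := by
  rcases le_or_gt (N / 5) a₁ with h | h
  · exact .inl (half_sub_le_of_mul_sub_le hν₀ hν hN ha hb hE₁ hE₂ hb₁ hE h)
  · refine .inr (half_sub_le_of_mul_sub_le hν₀ hν hN (by linarith) (by linarith) hE₂ hE₁ ha₁ hE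
      (by nlinarith))

namespace isCharPart

variable {n : ℕ} {ε : ℝ} {G : Fin n → Fin n → Prop} {A1 B1 C1 A2 B2 C2 : Finset (Fin n)}

lemma card_symmDiff_compl_le (hcp : isCharPart ε G A1 B1 C1 A2 B2 C2) :
    (#(A1 ∆ B1ᶜ) : ℝ) ≤ 2 * ε * n ∧ (#(B1 ∆ A1ᶜ) : ℝ) ≤ 2 * ε * n := by
  obtain ⟨⟨hcover, hcard⟩, -, -, -, hC1, -⟩ := hcp
  have hdisj := disjoint_of_union_eq_univ_of_card_eq hcover (by simpa using hcard)
  have hcover' : B1 ∪ A1 ∪ C1 = univ := by rwa [union_comm B1]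
  rw [← hC1]
  exact ⟨by exact_mod_cast card_le_card (symmDiff_compl_subset hdisj hcover),
    by exact_mod_cast card_le_card (symmDiff_compl_subset hdisj.symm hcover')⟩

variable {ν : ℝ} {A B : Finset (Fin n)}

lemma close_of_eBip_lt (hcp : isCharPart ε G A1 B1 C1 A2 B2 C2) (hε : 0 ≤ ε) (hεν : ε ≤ ν)
    (hν : ν ≤ 1 / 100) (hn : 1 / 2 ≤ ν * n) (hA : #A = n / 2) (hB : #B = n / 2)
    (he : (eBip G A B : ℝ) < ν * n ^ 2) :
    (#(A ∆ A1) : ℝ) ≤ 12 * ν * n ∨ (#(A ∆ B1) : ℝ) ≤ 12 * ν * n := by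
  obtain ⟨⟨hcover₁, -⟩, ⟨hcover₂, -⟩, hA1, hB1, hC1, hA2, hB2, hC2, -, -, hdegA, hdegB, -⟩ := hcp
  have hn₀ : (0 : ℝ) < n := by nlinarith [(Nat.cast_nonneg n : (0 : ℝ) ≤ n)]
  have hεn : ε * n ≤ ν * n := by gcongr
  have hA' : (n : ℝ) / 2 - 1 / 2 ≤ #A := hA ▸ half_sub_half_le_cast_div_two n
  have hB' : (n : ℝ) / 2 - 1 / 2 ≤ #B := hB ▸ half_sub_half_le_cast_div_two n
  have hA'' : (#A : ℝ) ≤ n / 2 := hA ▸ Nat.cast_div_le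
  have ha : (n : ℝ) / 2 - 3 * ν * n ≤ #(A ∩ A1) + #(A ∩ B1) := by
    have : (#A : ℝ) ≤ #(A ∩ A1) + #(A ∩ B1) + #C1 := by
      exact_mod_cast card_le_card_inter_add_card_inter_add_card hcover₁
    linarith
  have hb : (n : ℝ) / 2 - 3 * ν * n ≤ #(B ∩ A2) + #(B ∩ B2) := by
    have : (#B : ℝ) ≤ #(B ∩ A2) + #(B ∩ B2) + #C2 := by
      exact_mod_cast card_le_card_inter_add_card_inter_add_card hcover₂
    linarith
  have hE₁ := card_inter_mul_le_eBip G (X := A1) (Y := A2) (d := ν * n)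
    (fun v hv => by linarith [hdegA v hv]) A B
  have hE₂ := card_inter_mul_le_eBip G (X := B1) (Y := B2) (d := ν * n)
    (fun v hv => by linarith [hdegB v hv]) A B
  rcases half_sub_le_or_half_sub_le (hε.trans hεν) hν hn₀ ha hb hE₁ hE₂
    (Nat.cast_nonneg _) (Nat.cast_nonneg _) he with h | h
  · have : ((#(A ∆ A1) + 2 * #(A ∩ A1) : ℕ) : ℝ) = ((#A + #A1 : ℕ) : ℝ) := by
      rw [card_symmDiff_add_two_mul_card_inter]
    push_cast at this
    left; linarith
  · have : ((#(A ∆ B1) + 2 * #(A ∩ B1) : ℕ) : ℝ) = ((#A + #B1 : ℕ) : ℝ) := by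
      rw [card_symmDiff_add_two_mul_card_inter]
    push_cast at this
    right; linarith

lemma parts_close_of_eBip_lt {G' : Fin n → Fin n → Prop} {A1' B1' C1' A2' B2' C2' : Finset (Fin n)}
    (hcp : isCharPart ε G A1 B1 C1 A2 B2 C2) (hcp' : isCharPart ε G' A1' B1' C1' A2' B2' C2')
    (hε : 0 ≤ ε) (hεν : ε ≤ ν) (hν : ν ≤ 1 / 100) (hn : 1 / 2 ≤ ν * n)
    (hA : #A = n / 2) (hB : #B = n / 2)
    (he : (eBip G A B : ℝ) < ν * n ^ 2) (he' : (eBip G' A B : ℝ) < ν * n ^ 2) :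
    (#(A1 ∆ A1') : ℝ) ≤ 28 * ν * n ∨ (#(A1 ∆ B1') : ℝ) ≤ 28 * ν * n := by
  have tri (X Y Z : Finset (Fin n)) : (#(X ∆ Z) : ℝ) ≤ #(X ∆ Y) + #(Y ∆ Z) := by
    exact_mod_cast card_symmDiff_le_add X Y Z
  have comm (X Y : Finset (Fin n)) : (#(X ∆ Y) : ℝ) = #(Y ∆ X) := by rw [symmDiff_comm]
  have compl (X Y : Finset (Fin n)) : (#(Xᶜ ∆ Yᶜ) : ℝ) = #(X ∆ Y) := by
    rw [compl_symmDiff_compl]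
  have hεn : ε * n ≤ ν * n := by gcongr
  obtain ⟨hA1B1, hB1A1⟩ := hcp.card_symmDiff_compl_le
  obtain ⟨hA1B1', hB1A1'⟩ := hcp'.card_symmDiff_compl_le
  rcases hcp.close_of_eBip_lt hε hεν hν hn hA hB he with h | h <;>
    rcases hcp'.close_of_eBip_lt hε hεν hν hn hA hB he' with h' | h'
  · left; linarith [tri A1 A A1', comm A A1]
  · right; linarith [tri A1 A B1', comm A A1]
  · -- `A1 ≈ B1ᶜ ≈ A1'ᶜ ≈ B1'`
    right
    have := tri B1 A A1'
    linarith [tri A1 B1ᶜ B1', tri B1ᶜ A1'ᶜ B1', compl B1 A1',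
      comm A B1, comm A1'ᶜ B1']
  · left
    have := tri B1 A B1'
    linarith [tri A1 B1ᶜ A1', tri B1ᶜ B1'ᶜ A1', compl B1 B1',
      comm A B1, comm B1'ᶜ A1']

end isCharPart

section Stability

variable {n : ℕ} {G : Fin n → Fin n → Fin n → Prop} {A B : Finset (Fin n)}

lemma mul_cube_le_sum_eBip_of_nice {α γ : ℝ} (hα : 1 / 2 ≤ α * n)
    (hγ : γ * n ≤ #(univ.filter fun i => isNice α (G i))) (hA : #A = n / 2) (hB : #B = n / 2) :
    γ * α * n ^ 3 ≤ ∑ i, (eBip (G i) A B : ℝ) := by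
  have hsize : (1 / 2 - α) * n ≤ ((n / 2 : ℕ) : ℝ) := by
    linarith [half_sub_half_le_cast_div_two n]
  have hαn : 0 ≤ α * n ^ 2 := by nlinarith [(Nat.cast_nonneg n : (0 : ℝ) ≤ n)]
  calc γ * α * n ^ 3 = γ * n * (α * n ^ 2) := by ring
    _ ≤ #(univ.filter fun i => isNice α (G i)) * (α * n ^ 2) := by gcongr
    _ ≤ ∑ i, (eBip (G i) A B : ℝ) :=
        card_mul_le_sum_of_le (fun _ => Nat.cast_nonneg _)
          fun i hi => hi A B (hA ▸ hsize) (hB ▸ hsize)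

lemma mul_cube_le_sum_eBip_of_crossing {ε δ : ℝ} {A1 B1 C1 A2 B2 C2 : Fin n → Finset (Fin n)}
    (hcp : ∀ i, isExtremal ε (G i) →
      isCharPart ε (G i) (A1 i) (B1 i) (C1 i) (A2 i) (B2 i) (C2 i))
    (hε : 0 ≤ ε) (hεδ : ε ≤ δ / 100) (hδ : δ ≤ 1) (hn : 50 ≤ δ * n)
    (hcross : 2 * δ * (n : ℝ) ^ 2 ≤ (Nat.card {p : Fin n × Fin n //
        isExtremal ε (G p.1) ∧ isExtremal ε (G p.2) ∧
        δ * (n : ℝ) ≤ ((A1 p.1 ∆ A1 p.2).card : ℝ) ∧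
        δ * (n : ℝ) ≤ ((A1 p.1 ∆ B1 p.2).card : ℝ)} : ℝ))
    (hA : #A = n / 2) (hB : #B = n / 2) :
    δ * (δ / 100) * n ^ 3 ≤ ∑ i, (eBip (G i) A B : ℝ) := by
  have hn₀ : (0 : ℝ) < n := by nlinarith
  have hδ₀ : 0 < δ := by
    by_contra! h
    linarith [mul_nonpos_of_nonpos_of_nonneg h hn₀.le]
  have hpair : ∀ p : Fin n × Fin n, isExtremal ε (G p.1) ∧ isExtremal ε (G p.2) ∧
      δ * (n : ℝ) ≤ ((A1 p.1 ∆ A1 p.2).card : ℝ) ∧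
      δ * (n : ℝ) ≤ ((A1 p.1 ∆ B1 p.2).card : ℝ) →
      δ / 100 * n ^ 2 ≤ (eBip (G p.1) A B : ℝ) + eBip (G p.2) A B := by
    rintro ⟨i, j⟩ ⟨hi, hj, hAA, hAB⟩
    by_contra! h
    rcases (hcp i hi).parts_close_of_eBip_lt (hcp j hj) hε hεδ (by linarith) (by linarith) hA hB
      (by linarith [Nat.cast_nonneg (α := ℝ) (eBip (G j) A B)])
      (by linarith [Nat.cast_nonneg (α := ℝ) (eBip (G i) A B)]) with h | h <;> nlinarith
  have := natCard_mul_le_two_mul_card_mul_sum (fun i => Nat.cast_nonneg (eBip (G i) A B)) hpair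
  rw [Fintype.card_fin] at this
  have : 2 * n * (δ * (δ / 100) * n ^ 3) ≤ 2 * n * ∑ i, (eBip (G i) A B : ℝ) := by
    nlinarith [mul_le_mul_of_nonneg_right hcross (by positivity : (0 : ℝ) ≤ δ / 100 * n ^ 2)]
  exact le_of_mul_le_mul_left this (by positivity)

end Stability

/-- **Stability implies niceness of the collection.**
For `0 < 1/n ≪ μ' ≪ α ≪ γ, ε ≪ δ ≪ 1`: if `𝒢 = {G 1, …, G n}` is a collection of
bipartite graphs on `V₁ ∪ V₂` (sides of size `n`), with a fixed characteristic partition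
chosen for every `ε`-extremal member, and `𝒢` is `(γ,α,ε,δ)`-stable — i.e. either at
least `γn` of the graphs are `α`-nice (strongly stable), or the cross graph (whose
ordered-pair edge count appears below, an unordered edge counting twice) has at least
`δn²` edges (weakly stable) — then `𝒢` is `μ'`-nice: `∑ᵢ e_{Gᵢ}(A,B) ≥ μ'n³` for all
`A ⊆ V₁`, `B ⊆ V₂` of size `⌊n/2⌋`. -/
theorem stable_implies_nice :
    ∃ δ0 : ℝ, 0 < δ0 ∧ ∀ δ : ℝ, 0 < δ → δ ≤ δ0 →
    ∃ c1 : ℝ, 0 < c1 ∧ ∀ γ ε : ℝ, 0 < γ → γ ≤ c1 → 0 < ε → ε ≤ c1 →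
    ∃ α0 : ℝ, 0 < α0 ∧ ∀ α : ℝ, 0 < α → α ≤ α0 →
    ∃ μ0 : ℝ, 0 < μ0 ∧ ∀ μ' : ℝ, 0 < μ' → μ' ≤ μ0 →
    ∃ n0 : ℕ, ∀ n : ℕ, n0 ≤ n →
    ∀ G : Fin n → Fin n → Fin n → Prop,
    ∀ A1 B1 C1 A2 B2 C2 : Fin n → Finset (Fin n),
    (∀ i, isExtremal ε (G i) →
      isCharPart ε (G i) (A1 i) (B1 i) (C1 i) (A2 i) (B2 i) (C2 i)) →
    (γ * (n : ℝ) ≤ ((univ.filter (fun i : Fin n => isNice α (G i))).card : ℝ) ∨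
     2 * δ * (n : ℝ) ^ 2 ≤ (Nat.card {p : Fin n × Fin n //
        isExtremal ε (G p.1) ∧ isExtremal ε (G p.2) ∧
        δ * (n : ℝ) ≤ ((A1 p.1 ∆ A1 p.2).card : ℝ) ∧
        δ * (n : ℝ) ≤ ((A1 p.1 ∆ B1 p.2).card : ℝ)} : ℝ)) →
    ∀ A B : Finset (Fin n), A.card = n / 2 → B.card = n / 2 →
      μ' * (n : ℝ) ^ 3 ≤ ∑ i : Fin n, (eBip (G i) A B : ℝ) := by
  refine ⟨1, one_pos, fun δ hδ hδ1 => ⟨δ / 100, by positivity, fun γ ε hγ _ hε hεδ =>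
    ⟨1, one_pos, fun α hα _ => ⟨min (γ * α) (δ * (δ / 100)), lt_min (by positivity) (by positivity),
    fun μ' _ hμ' =>
    ⟨⌈50 / δ⌉₊ + ⌈1 / α⌉₊, fun n hn G A1 B1 C1 A2 B2 C2 hcp hstable A B hA hB => ?_⟩⟩⟩⟩⟩
  have hδn : 50 ≤ δ * n := by
    have := (Nat.ceil_le.mp (le_of_add_le_left hn) : 50 / δ ≤ n)
    rwa [div_le_iff₀ hδ, mul_comm] at this
  have hαn : 1 ≤ α * n := by
    have := (Nat.ceil_le.mp (le_of_add_le_right hn) : 1 / α ≤ n)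
    rwa [div_le_iff₀ hα, mul_comm] at this
  rcases hstable with hnice | hcross
  · calc μ' * n ^ 3 ≤ γ * α * n ^ 3 := by gcongr; exact hμ'.trans (min_le_left _ _)
      _ ≤ _ := mul_cube_le_sum_eBip_of_nice (by linarith) hnice hA hB
  · calc μ' * n ^ 3 ≤ δ * (δ / 100) * n ^ 3 := by gcongr; exact hμ'.trans (min_le_right _ _)
      _ ≤ _ := mul_cube_le_sum_eBip_of_crossing hcp hε.le hεδ hδ1 hδn hcross hA hB
end

section
/- Let 𝒞 be a set of colors and 𝒢 = {G_i : i ∈ 𝒞} a collection of bipartite graphs on a common bipartition Y ∪ B such that 7|Y| < |B| ≤ (3/5)|𝒞|. If Σ_{i ∈ 𝒞} |E(G_i)| ≥ t·|B|·|𝒞| for some integer t with 1 ≤ t ≤ |Y|, then there exist t pairwise vertex-disjoint stars S_1, …, S_t, each having 4 edges with its center in Y and its 4 leaves in B, together with an injective assignment of distinct colors of 𝒞 to the 4t edges, such that every edge assigned color c lies in G_c. -/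
/-!
Call `(i, b) ∈ C × B` an available pair at `y ∈ Y` when `G i y b`. Double counting turns the
edge hypothesis into `∑ y, #(pairs at y) ≥ t |B| |C|`, and each term is at most `|B| |C|`, so
there are distinct centres `y₀, …, y_{t-1}` with `|Y| · #(pairs at y_s) ≥ (s + 1) |B| |C|`.
Build the stars greedily in this order: while the star at `y_s` is built, at most `4 (s + 1)`
colours and leaves are in use, and they block at most `4 (s + 1) (|B| + |C|)` pairs, which
`7 |Y| < |B| ≤ 3 |C| / 5` makes smaller than the number of pairs available at `y_s`.
-/

open Finset Function

theorem Fin.injective_uncurry_snoc {γ : Type*} {n k : ℕ} {f : Fin n → Fin k → γ}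
    {x : Fin k → γ} (hf : Injective (uncurry f)) (hx : Injective x)
    (hfx : ∀ i j j', f i j ≠ x j') :
    Injective (uncurry (Fin.snoc f x : Fin (n + 1) → Fin k → γ)) := by
  rintro ⟨i, j⟩ ⟨i', j'⟩ h
  induction i using Fin.lastCases <;> induction i' using Fin.lastCases <;>
    simp only [uncurry_apply_pair, Fin.snoc_castSucc, Fin.snoc_last] at h
  · rw [hx h]
  · exact absurd h.symm (hfx _ _ _)
  · exact absurd h (hfx _ _ _)
  · cases hf (a₁ := (_, j)) (a₂ := (_, j')) h; rfl

theorem exists_injective_succ_mul_le_card_mul {ι : Type*} [DecidableEq ι] (f : ι → ℕ) (M : ℕ)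
    (hf : ∀ i, f i ≤ M) :
    ∀ (t : ℕ) (S : Finset ι), t ≤ #S → t * M ≤ ∑ i ∈ S, f i →
      ∃ g : Fin t → ι, Injective g ∧ (∀ s, g s ∈ S) ∧ ∀ s : Fin t, (s + 1) * M ≤ #S * f (g s)
  | 0, _, _, _ => ⟨Fin.elim0, injective_of_subsingleton _, fun s => s.elim0, fun s => s.elim0⟩
  | t + 1, S, hS, hsum => by
    obtain ⟨i₀, hi₀, hmax⟩ := S.exists_max_image f (card_pos.1 (by omega))
    have hsum' : t * M ≤ ∑ i ∈ S.erase i₀, f i := by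
      have := sum_erase_add S f hi₀
      nlinarith [hf i₀]
    obtain ⟨g, hg, hgS, hgf⟩ := exists_injective_succ_mul_le_card_mul f M hf t (S.erase i₀)
      (by rw [card_erase_of_mem hi₀]; omega) hsum'
    refine ⟨Fin.snoc g i₀, Fin.snoc_injective_of_injective hg ?_, fun s => ?_, fun s => ?_⟩
    · rintro ⟨s, hs⟩; exact notMem_erase i₀ S (hs ▸ hgS s)
    · induction s using Fin.lastCases with
      | last => simpa using hi₀
      | cast s => simpa using mem_of_mem_erase (hgS s)
    · induction s using Fin.lastCases with
      | last => simpa using hsum.trans (S.sum_le_card_nsmul f _ hmax)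
      | cast s =>
        simpa using (hgf s).trans (Nat.mul_le_mul_right _ (card_le_card (erase_subset i₀ S)))

section StarPacking

variable {α β : Type*} [Fintype α] [Fintype β] [DecidableEq α] [DecidableEq β]

theorem exists_mem_fst_notMem_snd_notMem (P : Finset (α × β)) (UA : Finset α) (UB : Finset β)
    (h : #UA * Fintype.card β + #UB * Fintype.card α < #P) :
    ∃ p ∈ P, p.1 ∉ UA ∧ p.2 ∉ UB := by
  by_contra! hP
  have hsub : P ⊆ UA ×ˢ univ ∪ univ ×ˢ UB := fun p hp => by
    by_cases hpA : p.1 ∈ UA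
    · exact mem_union_left _ (mem_product.2 ⟨hpA, mem_univ _⟩)
    · exact mem_union_right _ (mem_product.2 ⟨mem_univ _, hP p hp hpA⟩)
  have := (card_le_card hsub).trans (card_union_le _ _)
  simp only [card_product, card_univ] at this
  linarith

theorem exists_rainbow_star (P : Finset (α × β)) (k : ℕ) (UA : Finset α) (UB : Finset β)
    (h : (#UA + k) * Fintype.card β + (#UB + k) * Fintype.card α < #P) :
    ∃ a : Fin k → α, ∃ b : Fin k → β, Injective a ∧ Injective b ∧
      ∀ j, a j ∉ UA ∧ b j ∉ UB ∧ (a j, b j) ∈ P := by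
  induction k generalizing UA UB with
  | zero => exact ⟨Fin.elim0, Fin.elim0, injective_of_subsingleton _,
      injective_of_subsingleton _, fun j => j.elim0⟩
  | succ k ih =>
    obtain ⟨⟨a₀, b₀⟩, hP, ha₀, hb₀⟩ := exists_mem_fst_notMem_snd_notMem P UA UB (by nlinarith)
    have h' : (#(insert a₀ UA) + k) * Fintype.card β + (#(insert b₀ UB) + k) * Fintype.card α
        < #P := by
      rw [card_insert_of_notMem ha₀, card_insert_of_notMem hb₀]
      linarith
    obtain ⟨a, b, ha, hb, hab⟩ := ih (insert a₀ UA) (insert b₀ UB) h'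
    simp only [mem_insert, not_or] at hab
    refine ⟨Fin.cons a₀ a, Fin.cons b₀ b, Fin.cons_injective_iff.2 ⟨?_, ha⟩,
      Fin.cons_injective_iff.2 ⟨?_, hb⟩, fun j => Fin.cases ?_ (fun j => ?_) j⟩
    · rintro ⟨j, hj⟩; exact (hab j).1.1 hj
    · rintro ⟨j, hj⟩; exact (hab j).2.1.1 hj
    · exact ⟨ha₀, hb₀, hP⟩
    · simpa using ⟨(hab j).1.2, (hab j).2.1.2, (hab j).2.2⟩

theorem exists_disjoint_rainbow_stars (k : ℕ) :
    ∀ (t : ℕ) (P : Fin t → Finset (α × β)),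
      (∀ s : Fin t, k * (s + 1) * (Fintype.card α + Fintype.card β) < #(P s)) →
      ∃ a : Fin t → Fin k → α, ∃ b : Fin t → Fin k → β,
        Injective (uncurry a) ∧ Injective (uncurry b) ∧ ∀ s j, (a s j, b s j) ∈ P s
  | 0, _, _ => ⟨Fin.elim0, Fin.elim0, injective_of_subsingleton _,
      injective_of_subsingleton _, fun s => s.elim0⟩
  | t + 1, P, hP => by
    obtain ⟨a, b, ha, hb, hab⟩ :=
      exists_disjoint_rainbow_stars k t (fun s => P s.castSucc) fun s => hP s.castSucc
    have hA : #(univ.image (uncurry a)) ≤ k * t := card_image_le.trans (by simp [mul_comm])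
    have hB : #(univ.image (uncurry b)) ≤ k * t := card_image_le.trans (by simp [mul_comm])
    obtain ⟨x, y, hx, hy, hxy⟩ := exists_rainbow_star (P (Fin.last t)) k
      (univ.image (uncurry a)) (univ.image (uncurry b)) (by
        have := hP (Fin.last t)
        simp only [Fin.val_last] at this
        nlinarith)
    simp only [mem_image, mem_univ, true_and, Prod.exists, uncurry_apply_pair, not_exists] at hxy
    refine ⟨Fin.snoc a x, Fin.snoc b y,
      Fin.injective_uncurry_snoc ha hx fun i j j' => (hxy j').1 i j,
      Fin.injective_uncurry_snoc hb hy fun i j j' => (hxy j').2.1 i j, fun s j => ?_⟩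
    induction s using Fin.lastCases with
    | last => simpa using (hxy j).2.2
    | cast s => simpa using hab s j

end StarPacking

section ColorLeafPairs

variable {Y B C : Type*} [Fintype B] [Fintype C]

open Classical in
noncomputable def colorLeafPairs (G : C → Y → B → Prop) (y : Y) : Finset (C × B) :=
  univ.filter fun p => G p.1 y p.2

theorem mem_colorLeafPairs {G : C → Y → B → Prop} {y : Y} {p : C × B} :
    p ∈ colorLeafPairs G y ↔ G p.1 y p.2 := by
  simp [colorLeafPairs]

theorem card_colorLeafPairs_le (G : C → Y → B → Prop) (y : Y) :
    #(colorLeafPairs G y) ≤ Fintype.card C * Fintype.card B :=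
  (card_le_univ _).trans_eq (Fintype.card_prod C B)

theorem sum_card_colorLeafPairs [Fintype Y] (G : C → Y → B → Prop) :
    ∑ y, #(colorLeafPairs G y) = ∑ i, Nat.card {p : Y × B // G i p.1 p.2} := by
  classical
  simp only [colorLeafPairs, Nat.card_eq_fintype_card, Fintype.card_subtype, card_filter,
    Fintype.sum_prod_type]
  rw [sum_comm]

end ColorLeafPairs

theorem four_mul_succ_mul_add_lt {nY nB nC s P : ℕ} (hYB : 7 * nY < nB) (hBC : 5 * nB ≤ 3 * nC)
    (hP : (s + 1) * (nC * nB) ≤ nY * P) : 4 * (s + 1) * (nC + nB) < P := by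
  have hsC : 0 < (s + 1) * nC := Nat.mul_pos s.succ_pos (by omega)
  have hCB : (s + 1) * nC * (7 * nY) < nY * P :=
    (Nat.mul_lt_mul_of_pos_left hYB hsC).trans_le (by linarith)
  refine Nat.lt_of_mul_lt_mul_left (a := 5 * nY) ?_
  calc 5 * nY * (4 * (s + 1) * (nC + nB)) = 4 * nY * (s + 1) * (5 * (nC + nB)) := by ring
    _ ≤ 4 * nY * (s + 1) * (8 * nC) := Nat.mul_le_mul_left _ (by omega)
    _ ≤ 5 * ((s + 1) * nC * (7 * nY)) := by nlinarith
    _ < 5 * nY * P := by linarith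

theorem rainbow_stars_general {Y B C : Type*} [Fintype Y] [Fintype B] [Fintype C]
    (G : C → Y → B → Prop) (t : ℕ)
    (hYB : 7 * Fintype.card Y < Fintype.card B)
    (hBC : (Fintype.card B : ℝ) ≤ 3 / 5 * Fintype.card C)
    (ht2 : t ≤ Fintype.card Y)
    (hE : (t * Fintype.card B * Fintype.card C : ℝ) ≤
      ∑ i : C, (Nat.card {p : Y × B // G i p.1 p.2} : ℝ)) :
    ∃ c : Fin t → Y, ∃ l : Fin t → Fin 4 → B, ∃ col : Fin t → Fin 4 → C,
      Function.Injective c ∧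
      Function.Injective (fun p : Fin t × Fin 4 => l p.1 p.2) ∧
      Function.Injective (fun p : Fin t × Fin 4 => col p.1 p.2) ∧
      ∀ s : Fin t, ∀ j : Fin 4, G (col s j) (c s) (l s j) := by
  classical
  have hBC' : 5 * Fintype.card B ≤ 3 * Fintype.card C := by
    exact_mod_cast (by linarith : (5 * Fintype.card B : ℝ) ≤ 3 * Fintype.card C)
  have hsum : t * (Fintype.card C * Fintype.card B) ≤ ∑ y, #(colorLeafPairs G y) := by
    rw [sum_card_colorLeafPairs]
    have : t * Fintype.card B * Fintype.card C ≤ ∑ i, Nat.card {p : Y × B // G i p.1 p.2} := by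
      exact_mod_cast hE
    linarith
  obtain ⟨c, hc, -, hcG⟩ := exists_injective_succ_mul_le_card_mul _ _
    (card_colorLeafPairs_le G) t univ (by simpa using ht2) hsum
  obtain ⟨col, l, hcol, hl, hG⟩ := exists_disjoint_rainbow_stars 4 t
    (fun s => colorLeafPairs G (c s)) fun s => four_mul_succ_mul_add_lt hYB hBC' (hcG s)
  exact ⟨c, l, col, hc, hl, hcol, fun s j => mem_colorLeafPairs.1 (hG s j)⟩

/-- **Rainbow stars lemma** (Cheng–Sun).  Let `𝒞` be a set of colours and
`𝒢 = {G i : i ∈ 𝒞}` bipartite graphs on a common bipartition `Y ∪ B` with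
`7|Y| < |B| ≤ (3/5)|𝒞|`.  If `∑_{i ∈ 𝒞} |E(G i)| ≥ t·|B|·|𝒞|` for some integer
`1 ≤ t ≤ |Y|`, then there are `t` pairwise vertex-disjoint rainbow stars, each with its
centre in `Y` and 4 leaves in `B`, whose `4t` edges receive pairwise distinct colours
`col s j` with each edge lying in the graph of its colour. -/
theorem rainbow_stars {Y B C : Type*} [Fintype Y] [Fintype B] [Fintype C]
    (G : C → Y → B → Prop) (t : ℕ)
    (hYB : 7 * Fintype.card Y < Fintype.card B)
    (hBC : (Fintype.card B : ℝ) ≤ 3 / 5 * Fintype.card C)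
    (ht1 : 1 ≤ t) (ht2 : t ≤ Fintype.card Y)
    (hE : (t * Fintype.card B * Fintype.card C : ℝ) ≤
      ∑ i : C, (Nat.card {p : Y × B // G i p.1 p.2} : ℝ)) :
    ∃ c : Fin t → Y, ∃ l : Fin t → Fin 4 → B, ∃ col : Fin t → Fin 4 → C,
      Function.Injective c ∧
      Function.Injective (fun p : Fin t × Fin 4 => l p.1 p.2) ∧
      Function.Injective (fun p : Fin t × Fin 4 => col p.1 p.2) ∧
      ∀ s : Fin t, ∀ j : Fin 4, G (col s j) (c s) (l s j) :=
  rainbow_stars_general G t hYB hBC ht2 hE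
end

section
/- Assume 0 < 1/n ≪ δ ≪ 1 and 0 ≤ γ ≤ 3δ. Let 𝒞 be a set of colors with |𝒞| = n, let 𝒟 = {D_i : i ∈ 𝒞} be digraphs on a common vertex set V of size n with δ⁰(𝒟) ≥ ⌈n/2⌉, let A ∪ B be a partition of V with |A| = ⌈n/2⌉ + γn, and let 𝒞' ⊆ 𝒞 with |𝒞 \ 𝒞'| ≤ δn be such that D_i[B] has no edges for all i ∈ 𝒞'. Define Y_1 := {v ∈ A : |N⁺_{D_i}(v) ∩ B| ≤ (1 − δ^{1/4})|B| for at least δ^{1/4}|𝒞'| colors i ∈ 𝒞'}. Then |Y_1| ≤ γn/√δ. -/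
open Finset
open scoped Classical

/-- Number of out-neighbours of `v` inside the set `S` in the digraph `D`. -/
noncomputable def outDegIn {n : ℕ} (D : Fin n → Fin n → Prop) (v : Fin n)
    (S : Finset (Fin n)) : ℕ :=
  Nat.card {w : Fin n // w ∈ S ∧ D v w}

/-!
For each colour `i ∈ 𝒞'`, every `b ∈ B` has all of its `≥ ⌈n/2⌉` in-neighbours in `A`, so
double counting the `A → B` edges of `D i` shows that the total deficiency
`∑_{v ∈ A} (|B| - d⁺_{D i}(v, B))` is at most `|B|(|A| - ⌈n/2⌉) = |B| γ n`.
Summed over `𝒞'` this gives at most `|𝒞'| |B| γ n`, while each `v ∈ Y₁` has deficiency at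
least `δ^{1/4}|B|` for at least `δ^{1/4}|𝒞'|` colours, so contributes at least `√δ |𝒞'| |B|`.
-/

section Degrees

variable {n : ℕ} (D : Fin n → Fin n → Prop)

lemma outDegIn_eq_card_filter (v : Fin n) (S : Finset (Fin n)) :
    outDegIn D v S = #{w ∈ S | D v w} := by
  rw [outDegIn, Nat.card_eq_fintype_card, Fintype.card_subtype]
  congr 1
  ext w
  simp

lemma outDegIn_le_card (v : Fin n) (S : Finset (Fin n)) : outDegIn D v S ≤ #S := by
  rw [outDegIn_eq_card_filter]
  exact card_filter_le _ _

lemma inDeg_eq_card_filter_of_compl (A : Finset (Fin n)) {b : Fin n} (hb : b ∈ Aᶜ)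
    (hB : ∀ u ∈ Aᶜ, ∀ v ∈ Aᶜ, ¬ D u v) :
    inDeg D b = #{a ∈ A | D a b} := by
  rw [inDeg, Nat.card_eq_fintype_card, Fintype.card_subtype]
  congr 1
  ext a
  simp only [mem_filter, mem_univ, true_and, iff_and_self]
  intro hab
  by_contra ha
  exact hB a (mem_compl.mpr ha) b hb hab

lemma sum_outDegIn_eq_sum_card_filter (A B : Finset (Fin n)) :
    ∑ v ∈ A, outDegIn D v B = ∑ b ∈ B, #{a ∈ A | D a b} := by
  simp only [outDegIn_eq_card_filter, card_filter]
  exact sum_comm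

lemma card_compl_mul_le_sum_outDegIn {A : Finset (Fin n)} {k : ℕ}
    (hB : ∀ u ∈ Aᶜ, ∀ v ∈ Aᶜ, ¬ D u v) (hk : ∀ v, k ≤ inDeg D v) :
    #Aᶜ * k ≤ ∑ v ∈ A, outDegIn D v Aᶜ := by
  rw [sum_outDegIn_eq_sum_card_filter, ← smul_eq_mul]
  exact card_nsmul_le_sum _ _ _ fun b hb => inDeg_eq_card_filter_of_compl D A hb hB ▸ hk b

lemma sum_card_compl_sub_outDegIn_le {A : Finset (Fin n)} {k : ℕ}
    (hB : ∀ u ∈ Aᶜ, ∀ v ∈ Aᶜ, ¬ D u v) (hk : ∀ v, k ≤ inDeg D v) :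
    ∑ v ∈ A, ((#Aᶜ : ℝ) - outDegIn D v Aᶜ) ≤ #Aᶜ * (#A - k) := by
  have h : ((#Aᶜ * k : ℕ) : ℝ) ≤ ((∑ v ∈ A, outDegIn D v Aᶜ : ℕ) : ℝ) :=
    Nat.cast_le.mpr (card_compl_mul_le_sum_outDegIn D hB hk)
  push_cast at h
  rw [sum_sub_distrib, sum_const, nsmul_eq_mul]
  linarith

end Degrees

lemma card_filter_mul_mul_le_sum_sum {α β : Type*} {s : Finset α} {t : Finset β}
    {f : α → β → ℝ} {P : α → β → Prop} [∀ x, DecidablePred (P x)] {a b : ℝ}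
    (hf : ∀ x ∈ s, ∀ y ∈ t, 0 ≤ f x y) (hb : 0 ≤ b) (hP : ∀ x ∈ s, ∀ y ∈ t, P x y → b ≤ f x y) :
    #{x ∈ s | a ≤ #{y ∈ t | P x y}} * a * b ≤ ∑ x ∈ s, ∑ y ∈ t, f x y := by
  have hrow : ∀ x ∈ {x ∈ s | a ≤ #{y ∈ t | P x y}}, a * b ≤ ∑ y ∈ t, f x y := by
    intro x hx
    obtain ⟨hxs, hxa⟩ := mem_filter.mp hx
    calc a * b ≤ #{y ∈ t | P x y} * b := mul_le_mul_of_nonneg_right hxa hb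
      _ ≤ ∑ y ∈ t with P x y, f x y := by
        rw [← nsmul_eq_mul]
        exact card_nsmul_le_sum _ _ _ fun y hy =>
          hP x hxs y (mem_filter.mp hy).1 (mem_filter.mp hy).2
      _ ≤ ∑ y ∈ t, f x y :=
        sum_le_sum_of_subset_of_nonneg (filter_subset _ _) fun y hy _ => hf x hxs y hy
  calc _ = #{x ∈ s | a ≤ #{y ∈ t | P x y}} • (a * b) := by rw [nsmul_eq_mul, mul_assoc]
    _ ≤ ∑ x ∈ s with a ≤ #{y ∈ t | P x y}, ∑ y ∈ t, f x y := card_nsmul_le_sum _ _ _ hrow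
    _ ≤ ∑ x ∈ s, ∑ y ∈ t, f x y :=
      sum_le_sum_of_subset_of_nonneg (filter_subset _ _) fun x hx _ =>
        sum_nonneg fun y hy => hf x hx y hy

/-- **Bound on the exceptional set `Y₁`.**  In the setting of the extremal-case lemma
(`0 < 1/n ≪ δ ≪ 1`, `0 ≤ γ ≤ 3δ`, loopless digraphs with minimum semi-degree
`≥ ⌈n/2⌉`, `|A| = ⌈n/2⌉ + γn`, `|𝒞 \ 𝒞'| ≤ δn`, and `D i[B]` empty for all `i ∈ 𝒞'`
where `B = Aᶜ`), the set
`Y₁ = {v ∈ A : d⁺_{D i}(v, B) ≤ (1 − δ^{1/4})|B| for at least δ^{1/4}|𝒞'| colours i ∈ 𝒞'}`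
has size at most `γn/√δ`. -/
theorem Y1_bound :
    ∃ δ0 : ℝ, 0 < δ0 ∧ ∀ δ : ℝ, 0 < δ → δ ≤ δ0 →
    ∃ n0 : ℕ, ∀ n : ℕ, n0 ≤ n →
    ∀ γ : ℝ, 0 ≤ γ → γ ≤ 3 * δ →
    ∀ D : Fin n → Fin n → Fin n → Prop,
    (∀ i v, ¬ D i v v) →
    (∀ i v, (n + 1) / 2 ≤ outDeg (D i) v ∧ (n + 1) / 2 ≤ inDeg (D i) v) →
    ∀ A : Finset (Fin n), (A.card : ℝ) = (((n + 1) / 2 : ℕ) : ℝ) + γ * n →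
    ∀ C' : Finset (Fin n), ((C'ᶜ.card : ℝ) ≤ δ * n) →
    (∀ i ∈ C', ∀ u ∈ Aᶜ, ∀ v ∈ Aᶜ, ¬ D i u v) →
    (((A.filter (fun v : Fin n =>
        δ ^ ((1 : ℝ) / 4) * (C'.card : ℝ) ≤
          ((C'.filter (fun i : Fin n =>
            (outDegIn (D i) v Aᶜ : ℝ) ≤ (1 - δ ^ ((1 : ℝ) / 4)) * (Aᶜ.card : ℝ))).card
            : ℝ))).card : ℝ)
      ≤ γ * n / Real.sqrt δ) := by
  refine ⟨1 / 100, by norm_num, fun δ hδ hδ_le => ⟨2, ?_⟩⟩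
  intro n hn γ hγ hγδ D _ hdeg A hA C' hC' hB
  set q := δ ^ ((1 : ℝ) / 4)
  have hqq : q * q = Real.sqrt δ := by
    rw [← Real.rpow_add hδ, Real.sqrt_eq_rpow]
    norm_num
  have hn : (2 : ℝ) ≤ n := by exact_mod_cast hn
  have hhalf : (((n + 1) / 2 : ℕ) : ℝ) ≤ (n + 1) / 2 := by exact_mod_cast Nat.cast_div_le
  have hA_add : (#A : ℝ) + #Aᶜ = n := by
    exact_mod_cast (card_add_card_compl A).trans (Fintype.card_fin n)
  have hC_add : (#C' : ℝ) + #C'ᶜ = n := by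
    exact_mod_cast (card_add_card_compl C').trans (Fintype.card_fin n)
  have hB_pos : 0 < (#Aᶜ : ℝ) := by nlinarith
  have hC_pos : 0 < (#C' : ℝ) := by nlinarith
  have hcolour : ∀ i ∈ C', ∑ v ∈ A, ((#Aᶜ : ℝ) - outDegIn (D i) v Aᶜ) ≤ #Aᶜ * (γ * n) := by
    intro i hi
    have h := sum_card_compl_sub_outDegIn_le (D i) (hB i hi) fun v => (hdeg i v).2
    rwa [hA, add_sub_cancel_left] at h
  have hY := card_filter_mul_mul_le_sum_sum (s := A) (t := C')
    (f := fun v i => (#Aᶜ : ℝ) - outDegIn (D i) v Aᶜ)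
    (P := fun v i => (outDegIn (D i) v Aᶜ : ℝ) ≤ (1 - q) * #Aᶜ) (a := q * #C') (b := q * #Aᶜ)
    (fun v _ i _ => sub_nonneg.mpr (Nat.cast_le.mpr (outDegIn_le_card _ _ _)))
    (by positivity) fun v _ i _ h => by linarith
  rw [sum_comm] at hY
  have htotal := (hY.trans (sum_le_sum hcolour)).trans_eq (by rw [sum_const, nsmul_eq_mul])
  rw [le_div_iff₀ (Real.sqrt_pos.mpr hδ), ← hqq]
  refine le_of_mul_le_mul_right ?_ (mul_pos hC_pos hB_pos)
  linarith
end
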